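/- arXiv:math/0211136 — 8 statements merged into one kernel-verified Lean document; each statement's English description precedes it below -/
import Mathlib

section
/- Let (M,d) be a proper metric space (closed and bounded subsets of M are compact), and let x, y ∈ M. Suppose there exists a continuous path in M from x to y of finite length, and let ℓ denote the infimum of the lengths of all continuous paths in M from x to y. Then there exists a map q : [0,1] → M with q(0) = x, q(1) = y, and d(q(s), q(t)) ≤ ℓ·|s − t| for all s, t ∈ [0,1]; moreover no such map exists with Lipschitz constant strictly smaller than ℓ when x ≠ y. -/
open Set ENNReal

lemma dist_le_sum_Ico' {M : Type*} [PseudoMetricSpace M] (f : ℕ → M) :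
    ∀ {i j : ℕ}, i ≤ j → dist (f i) (f j) ≤ ∑ l ∈ Finset.Ico i j, dist (f (l+1)) (f l) := by
  intro i j h
  induction j, h using Nat.le_induction with
  | base => simp
  | succ j hij ih =>
    rw [Finset.sum_Ico_succ_top hij]
    calc dist (f i) (f (j+1)) ≤ dist (f i) (f j) + dist (f j) (f (j+1)) := dist_triangle _ _ _
    _ ≤ _ := by rw [dist_comm (f j)]; exact add_le_add_left ih _

lemma sum_blocks' {d : ℕ → ℝ} (g : ℕ → ℕ) (hg : Monotone g) (k : ℕ) :
    ∑ j ∈ Finset.range k, ∑ l ∈ Finset.Ico (g j) (g (j+1)), d l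
      = ∑ l ∈ Finset.Ico (g 0) (g k), d l := by
  induction k with
  | zero => simp
  | succ k ih =>
    rw [Finset.sum_range_succ, ih]
    exact Finset.sum_Ico_consecutive _ (hg (Nat.zero_le _)) (hg (Nat.le_succ _))

lemma exists_chain' {M : Type*} [PseudoEMetricSpace M] {f : ℝ → M} {s : Set ℝ} {r : ℝ≥0∞}
    (h : r < eVariationOn f s) :
    ∃ (n : ℕ) (u : ℕ → ℝ), Monotone u ∧ (∀ i, u i ∈ s) ∧
      r < ∑ i ∈ Finset.range n, edist (f (u (i+1))) (f (u i)) := by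
  rw [eVariationOn, lt_iSup_iff] at h
  obtain ⟨⟨n, u, hu, us⟩, h⟩ := h
  exact ⟨n, u, hu, us, h⟩

set_option maxHeartbeats 1000000 in
lemma approx' {M : Type*} [MetricSpace M] (p : ℝ → M) {a b : ℝ} (hab : a ≤ b)
    (hcont : ContinuousOn p (Icc a b)) (hfin : eVariationOn p (Icc a b) ≠ ⊤)
    {ε : ℝ} (hε : 0 < ε) :
    ∃ z : ℝ → M, z 0 = p a ∧ z 1 = p b ∧ ∀ s t : ℝ,
      dist (z s) (z t) ≤ (eVariationOn p (Icc a b)).toReal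
        * |max 0 (min 1 s) - max 0 (min 1 t)| + ε := by
  classical
  set L : ℝ := (eVariationOn p (Icc a b)).toReal with hLdef
  have hL0 : 0 ≤ L := ENNReal.toReal_nonneg
  rcases eq_or_lt_of_le hab with rfl | hab'
  · refine ⟨fun _ => p a, rfl, rfl, fun s t => ?_⟩
    have h1 : 0 ≤ L * |max 0 (min 1 s) - max 0 (min 1 t)| := mul_nonneg hL0 (abs_nonneg _)
    simp only [dist_self]
    linarith
  -- chain with almost full variation
  obtain ⟨k, c, hc, hcs, hcsum⟩ : ∃ (k : ℕ) (c : ℕ → ℝ), Monotone c ∧ (∀ i, c i ∈ Icc a b) ∧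
      L - ε/4 ≤ ∑ j ∈ Finset.range k, dist (p (c (j+1))) (p (c j)) := by
    rcases le_or_gt L (ε/4) with h | h
    · exact ⟨0, fun _ => a, monotone_const, fun _ => left_mem_Icc.2 hab, by
        rw [Finset.sum_range_zero]; linarith⟩
    · have h1 : ENNReal.ofReal (L - ε/4) < eVariationOn p (Icc a b) := by
        rw [← ENNReal.ofReal_toReal hfin]
        exact (ENNReal.ofReal_lt_ofReal_iff (by linarith)).2 (by linarith)
      obtain ⟨n, u, hu, us, hlt⟩ := exists_chain' h1
      refine ⟨n, u, hu, us, ?_⟩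
      have he : ∑ i ∈ Finset.range n, edist (p (u (i+1))) (p (u i))
          = ENNReal.ofReal (∑ i ∈ Finset.range n, dist (p (u (i+1))) (p (u i))) := by
        rw [ENNReal.ofReal_sum_of_nonneg (fun i _ => dist_nonneg)]
        exact Finset.sum_congr rfl fun i _ => edist_dist _ _
      rw [he] at hlt
      exact le_of_lt ((ENNReal.ofReal_lt_ofReal_iff_of_nonneg (by linarith)).1 hlt)
  -- uniform continuity
  set η : ℝ := min (ε/2) (ε/(8*(k+1))) with hηdef
  have hη0 : 0 < η := lt_min (by linarith) (by positivity)
  obtain ⟨δ, hδ0, hδ⟩ := Metric.uniformContinuousOn_iff.1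
    (isCompact_Icc.uniformContinuousOn_of_continuous hcont) η hη0
  -- uniform partition
  obtain ⟨N0, hN0⟩ := exists_nat_gt ((b - a)/δ)
  set N : ℕ := max N0 1 with hNdef
  have hN1 : 1 ≤ N := le_max_right _ _
  have hNpos : (0:ℝ) < N := by exact_mod_cast Nat.lt_of_lt_of_le Nat.zero_lt_one hN1
  have hmesh : (b - a)/N < δ := by
    rw [div_lt_iff₀ hNpos]
    have h2 : (b - a)/δ < N := lt_of_lt_of_le hN0 (by exact_mod_cast le_max_left N0 1)
    rw [div_lt_iff₀ hδ0] at h2; linarith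
  set h : ℝ := (b - a)/N with hhdef
  have hpos : 0 < h := div_pos (by linarith) hNpos
  have hNh : (N:ℝ) * h = b - a := by rw [hhdef]; field_simp
  set u : ℕ → ℝ := fun i => a + (min i N : ℕ) * h with hudef
  have humono : Monotone u := fun i j hij => by
    dsimp only [u]
    have : ((min i N : ℕ):ℝ) ≤ ((min j N : ℕ):ℝ) := by
      exact_mod_cast min_le_min hij le_rfl
    nlinarith
  have humem : ∀ i, u i ∈ Icc a b := by
    intro i
    have h1 : (0:ℝ) ≤ ((min i N : ℕ):ℝ) := Nat.cast_nonneg _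
    have h2 : ((min i N : ℕ):ℝ) ≤ (N:ℝ) := by exact_mod_cast min_le_right i N
    constructor <;> dsimp only [u] <;> nlinarith
  have hu0 : u 0 = a := by simp [u]
  have huN : ∀ i, N ≤ i → u i = b := by
    intro i hi
    dsimp only [u]
    rw [min_eq_right hi]
    linarith [hNh]
  set d : ℕ → ℝ := fun i => dist (p (u (i+1))) (p (u i)) with hddef
  have hd0 : ∀ i, 0 ≤ d i := fun i => dist_nonneg
  have hdsmall : ∀ i, d i < η := by
    intro i
    apply hδ _ (humem _) _ (humem _)
    have h1 : u i ≤ u (i+1) := humono (Nat.le_succ i)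
    have h2 : u (i+1) - u i ≤ h := by
      have h3 : ((min (i+1) N : ℕ):ℝ) ≤ ((min i N : ℕ):ℝ) + 1 := by
        have : min (i+1) N ≤ min i N + 1 := by omega
        exact_mod_cast this
      dsimp only [u]; nlinarith
    rw [Real.dist_eq, abs_of_nonneg (by linarith)]
    linarith [hmesh]
  set D : ℝ := ∑ i ∈ Finset.range N, d i with hDdef
  -- lower bound on D
  set g : ℕ → ℕ := fun j => ⌊(c (min j k) - a) / h⌋₊ with hgdef
  have hgmono : Monotone g := by
    intro i j hij
    apply Nat.floor_le_floor
    have : c (min i k) ≤ c (min j k) := hc (min_le_min hij le_rfl)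
    apply div_le_div_of_nonneg_right ?_ hpos.le
    linarith
  have hgN : ∀ j, g j ≤ N := by
    intro j
    have h1 : (c (min j k) - a) / h ≤ (N:ℝ) := by
      rw [div_le_iff₀ hpos]
      have := (hcs (min j k)).2
      nlinarith
    calc g j ≤ ⌊(N:ℝ)⌋₊ := Nat.floor_le_floor h1
    _ = N := Nat.floor_natCast N
  have hgu : ∀ j, dist (p (u (g j))) (p (c (min j k))) < η := by
    intro j
    have hw : c (min j k) ∈ Icc a b := hcs _
    have hwa : 0 ≤ (c (min j k) - a) / h := div_nonneg (by linarith [hw.1]) hpos.le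
    have h1 : ((g j : ℕ):ℝ) ≤ (c (min j k) - a)/h := Nat.floor_le hwa
    have h2 : (c (min j k) - a)/h < (g j : ℕ) + 1 := Nat.lt_floor_add_one _
    have hugj : u (g j) = a + (g j : ℕ) * h := by
      dsimp only [u]; rw [min_eq_left (hgN j)]
    apply hδ _ (humem _) _ hw
    rw [Real.dist_eq, hugj]
    rw [le_div_iff₀ hpos] at h1
    rw [div_lt_iff₀ hpos] at h2
    rw [add_mul, one_mul] at h2
    rw [abs_lt]
    constructor <;> linarith [hmesh]
  have hDlow : L - ε/2 ≤ D := by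
    have step1 : ∀ j < k, dist (p (c (j+1))) (p (c j)) - 2*η
        ≤ dist (p (u (g (j+1)))) (p (u (g j))) := by
      intro j hj
      have e1 := hgu (j+1); have e2 := hgu j
      rw [min_eq_left hj] at e1
      rw [min_eq_left hj.le] at e2
      have t4 := dist_triangle4 (p (c (j+1))) (p (u (g (j+1)))) (p (u (g j))) (p (c j))
      have hcomm : dist (p (c (j+1))) (p (u (g (j+1)))) = dist (p (u (g (j+1)))) (p (c (j+1))) :=
        dist_comm _ _
      linarith
    have step2 : (∑ j ∈ Finset.range k, dist (p (c (j+1))) (p (c j))) - 2*k*η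
        ≤ ∑ j ∈ Finset.range k, dist (p (u (g (j+1)))) (p (u (g j))) := by
      have h1 : ∑ j ∈ Finset.range k, (dist (p (c (j+1))) (p (c j)) - 2*η)
          ≤ ∑ j ∈ Finset.range k, dist (p (u (g (j+1)))) (p (u (g j))) :=
        Finset.sum_le_sum fun j hj => step1 j (Finset.mem_range.1 hj)
      rw [Finset.sum_sub_distrib, Finset.sum_const, Finset.card_range, nsmul_eq_mul] at h1
      linarith
    have step3 : ∑ j ∈ Finset.range k, dist (p (u (g (j+1)))) (p (u (g j))) ≤ D := by
      calc ∑ j ∈ Finset.range k, dist (p (u (g (j+1)))) (p (u (g j)))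
          ≤ ∑ j ∈ Finset.range k, ∑ l ∈ Finset.Ico (g j) (g (j+1)), d l := by
            refine Finset.sum_le_sum fun j _ => ?_
            rw [dist_comm]
            exact dist_le_sum_Ico' (fun i => p (u i)) (hgmono (Nat.le_succ j))
        _ = ∑ l ∈ Finset.Ico (g 0) (g k), d l := sum_blocks' g hgmono k
        _ ≤ D := by
            apply Finset.sum_le_sum_of_subset_of_nonneg
            · intro l hl
              rw [Finset.mem_Ico] at hl
              rw [Finset.mem_range]
              exact lt_of_lt_of_le hl.2 (hgN k)
            · exact fun i _ _ => hd0 i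
    have hkη : 2*(k:ℝ)*η ≤ ε/4 := by
      have hle : η ≤ ε/(8*(k+1)) := min_le_right _ _
      have hk0 : (0:ℝ) ≤ (k:ℝ) := Nat.cast_nonneg k
      have hk1 : (0:ℝ) < (k:ℝ)+1 := by positivity
      have hfrac : (k:ℝ)/((k:ℝ)+1) ≤ 1 := by rw [div_le_one hk1]; linarith
      have heq : 2*(k:ℝ)*(ε/(8*((k:ℝ)+1))) = ε * ((k:ℝ)/((k:ℝ)+1)) / 4 := by
        field_simp; ring
      have h2 := mul_le_mul_of_nonneg_left hfrac hε.le
      have h3 : 2*(k:ℝ)*η ≤ 2*(k:ℝ)*(ε/(8*((k:ℝ)+1))) :=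
        mul_le_mul_of_nonneg_left hle (by positivity)
      rw [heq] at h3
      linarith
    linarith
  have hσnn : ∀ n, 0 ≤ ∑ i ∈ Finset.range n, d i := fun n => Finset.sum_nonneg fun i _ => hd0 i
  have hD0 : 0 ≤ D := hσnn N
  -- D ≤ L
  have hofReal : ∀ (m : ℕ) (v : ℕ → ℝ),
      ∑ i ∈ Finset.range m, edist (p (v (i+1))) (p (v i))
        = ENNReal.ofReal (∑ i ∈ Finset.range m, dist (p (v (i+1))) (p (v i))) := by
    intro m v
    rw [ENNReal.ofReal_sum_of_nonneg (fun i _ => dist_nonneg)]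
    exact Finset.sum_congr rfl fun i _ => edist_dist _ _
  have hDL : D ≤ L := by
    have h1 := eVariationOn.sum_le (f := p) (n := N) humono humem
    rw [hofReal N u] at h1
    have h2 := ENNReal.toReal_mono hfin h1
    rwa [ENNReal.toReal_ofReal hD0] at h2
  -- partial sums and the reparametrized map
  set σ : ℕ → ℝ := fun j => ∑ i ∈ Finset.range j, d i with hσdef
  have hσ0 : σ 0 = 0 := Finset.sum_range_zero _
  have hσmono : Monotone σ := fun i j hij =>
    Finset.sum_le_sum_of_subset_of_nonneg (Finset.range_subset_range.2 hij) (fun i _ _ => hd0 i)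
  have hσN : σ N = D := rfl
  set cl : ℝ → ℝ := fun s => max 0 (min 1 s) with hcldef
  have hcl0 : ∀ s, 0 ≤ cl s := fun s => le_max_left _ _
  have hcl1 : ∀ s, cl s ≤ 1 := fun s => max_le zero_le_one (min_le_left _ _)
  set J : ℝ → ℕ := fun s => Nat.findGreatest (fun j => σ j ≤ cl s * D) N with hJdef
  have hJ1 : ∀ s, σ (J s) ≤ cl s * D := fun s =>
    Nat.findGreatest_spec (P := fun j => σ j ≤ cl s * D) (Nat.zero_le N)
      (show σ 0 ≤ cl s * D by rw [hσ0]; exact mul_nonneg (hcl0 s) hD0)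
  have hJN : ∀ s, J s ≤ N := fun s => Nat.findGreatest_le N
  have hJlow : ∀ s, cl s * D - ε/2 ≤ σ (J s) := by
    intro s
    rcases lt_or_ge (J s) N with hlt | hge
    · have hng := Nat.findGreatest_is_greatest (P := fun j => σ j ≤ cl s * D)
        (Nat.lt_succ_self (J s)) hlt
      have hng' : ¬ (σ (J s + 1) ≤ cl s * D) := hng
      push_neg at hng'
      have hstep : σ (J s + 1) = σ (J s) + d (J s) := Finset.sum_range_succ _ _
      have hds : d (J s) ≤ ε/2 := le_trans (hdsmall (J s)).le (min_le_left _ _)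
      linarith [hng']
    · have hJe : J s = N := le_antisymm (hJN s) hge
      rw [hJe, hσN]
      have := mul_le_of_le_one_left hD0 (hcl1 s)
      linarith
  set z : ℝ → M := fun s => p (u (J s)) with hzdef
  have hJmono : ∀ s t, cl s ≤ cl t → J s ≤ J t := by
    intro s t hst
    exact Nat.le_findGreatest (hJN s)
      (le_trans (hJ1 s) (mul_le_mul_of_nonneg_right hst hD0))
  refine ⟨z, ?_, ?_, ?_⟩
  · -- z 0 = p a
    have h0 : cl 0 = 0 := by simp [hcldef]
    have hs0 : σ (J 0) = 0 := by
      refine le_antisymm ?_ (hσ0 ▸ hσmono (Nat.zero_le _))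
      have := hJ1 0
      rw [h0, zero_mul] at this
      exact this
    have hdist : dist (p (u 0)) (p (u (J 0))) ≤ σ (J 0) := by
      have hh := dist_le_sum_Ico' (fun i => p (u i)) (Nat.zero_le (J 0))
      rwa [← Finset.range_eq_Ico] at hh
    rw [hs0] at hdist
    have : p (u (J 0)) = p (u 0) := (dist_le_zero.1 hdist).symm
    rw [hzdef]
    simpa [hu0] using this
  · -- z 1 = p b
    have h1 : cl 1 = 1 := by norm_num [hcldef]
    have hJ1N : J 1 = N := by
      refine le_antisymm (hJN 1) (Nat.le_findGreatest le_rfl ?_)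
      show σ N ≤ cl 1 * D
      rw [h1, one_mul]
    show p (u (J 1)) = p b
    rw [hJ1N, huN N le_rfl]
  · -- Lipschitz-type estimate
    have key : ∀ s t : ℝ, cl s ≤ cl t → dist (z s) (z t) ≤ L * (cl t - cl s) + ε := by
      intro s t hst
      have hJst : J s ≤ J t := hJmono s t hst
      have huu : u (J s) ≤ u (J t) := humono hJst
      set A := eVariationOn p (Icc a (u (J s))) with hAdef
      set Bv := eVariationOn p (Icc (u (J s)) (u (J t))) with hBdef
      set Cv := eVariationOn p (Icc (u (J t)) b) with hCdef
      have hA : A ≠ ⊤ := ne_top_of_le_ne_top hfin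
        (eVariationOn.mono p (Icc_subset_Icc le_rfl (humem _).2))
      have hB : Bv ≠ ⊤ := ne_top_of_le_ne_top hfin
        (eVariationOn.mono p (Icc_subset_Icc (humem _).1 (humem _).2))
      have hC : Cv ≠ ⊤ := ne_top_of_le_ne_top hfin
        (eVariationOn.mono p (Icc_subset_Icc (humem _).1 le_rfl))
      have add1 := eVariationOn.Icc_add_Icc p (s := (univ : Set ℝ))
        (humem (J s)).1 huu (mem_univ _)
      have add2 := eVariationOn.Icc_add_Icc p (s := (univ : Set ℝ))
        (le_trans (humem (J s)).1 huu) (humem (J t)).2 (mem_univ _)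
      simp only [Set.univ_inter] at add1 add2
      have hsum : A + Bv + Cv = eVariationOn p (Icc a b) := by
        rw [← hAdef, ← hBdef] at add1
        rw [← hCdef] at add2
        rw [add1, add2]
      have hreal : A.toReal + Bv.toReal + Cv.toReal = L := by
        rw [← ENNReal.toReal_add hA hB, ← ENNReal.toReal_add (ENNReal.add_ne_top.2 ⟨hA, hB⟩) hC,
          hsum]
      -- lower bound for A
      have hA_low : σ (J s) ≤ A.toReal := by
        have hmono' : Monotone fun i => u (min i (J s)) :=
          fun i j hij => humono (min_le_min hij le_rfl)
        have hmem' : ∀ i, u (min i (J s)) ∈ Icc a (u (J s)) :=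
          fun i => ⟨(humem _).1, humono (min_le_right _ _)⟩
        have hsum' := eVariationOn.sum_le (f := p) (n := J s) hmono' hmem'
        have heq : ∀ i ∈ Finset.range (J s),
            edist (p (u (min (i+1) (J s)))) (p (u (min i (J s)))) = ENNReal.ofReal (d i) := by
          intro i hi
          rw [Finset.mem_range] at hi
          rw [min_eq_left hi, min_eq_left hi.le]
          exact edist_dist _ _
        rw [Finset.sum_congr rfl heq,
          ← ENNReal.ofReal_sum_of_nonneg (fun i _ => hd0 i)] at hsum'
        have h2 := ENNReal.toReal_mono hA hsum'
        rwa [ENNReal.toReal_ofReal (hσnn (J s))] at h2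
      -- lower bound for Cv
      have hC_low : D - σ (J t) ≤ Cv.toReal := by
        have hmono' : Monotone fun i => u (min (J t + i) N) := by
          intro i j hij
          exact humono (min_le_min (by omega) le_rfl)
        have hmem' : ∀ i, u (min (J t + i) N) ∈ Icc (u (J t)) b := by
          intro i
          refine ⟨humono (le_min (Nat.le_add_right _ _) (hJN t)), (humem _).2⟩
        have hsum' := eVariationOn.sum_le (f := p) (n := N - J t) hmono' hmem'
        have heq : ∀ i ∈ Finset.range (N - J t),
            edist (p (u (min (J t + (i + 1)) N))) (p (u (min (J t + i) N)))
              = ENNReal.ofReal (d (J t + i)) := by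
          intro i hi
          rw [Finset.mem_range] at hi
          rw [min_eq_left (by omega), min_eq_left (by omega)]
          exact edist_dist _ _
        have hconv : ∀ i ∈ Finset.range (N - J t),
            edist (p (u (min (J t + (i + 1)) N))) (p (u (min (J t + i) N)))
              = ENNReal.ofReal (d (J t + i)) := heq
        rw [Finset.sum_congr rfl hconv,
          ← ENNReal.ofReal_sum_of_nonneg (fun i _ => hd0 _)] at hsum'
        have hsplit : σ (J t) + ∑ i ∈ Finset.range (N - J t), d (J t + i) = D := by
          rw [← Finset.sum_Ico_eq_sum_range (f := d) (m := J t) (n := N)]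
          show (∑ i ∈ Finset.range (J t), d i) + _ = ∑ i ∈ Finset.range N, d i
          simp only [Finset.range_eq_Ico]
          exact Finset.sum_Ico_consecutive _ (Nat.zero_le _) (hJN t)
        have h2 := ENNReal.toReal_mono hC hsum'
        rw [ENNReal.toReal_ofReal (Finset.sum_nonneg fun i _ => hd0 _)] at h2
        linarith
      have hB_real : Bv.toReal ≤ (L - D) + (σ (J t) - σ (J s)) := by linarith
      have hdistB : dist (z s) (z t) ≤ Bv.toReal := by
        have he := eVariationOn.edist_le p (left_mem_Icc.2 huu) (right_mem_Icc.2 huu)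
        have h2 := ENNReal.toReal_mono hB he
        rw [hzdef]
        dsimp only
        rw [dist_edist]
        exact h2
      have hmul : (cl t - cl s) * D ≤ (cl t - cl s) * L :=
        mul_le_mul_of_nonneg_left hDL (sub_nonneg.2 hst)
      have hexp : (cl t - cl s) * D = cl t * D - cl s * D := by ring
      have hcomm : (cl t - cl s) * L = L * (cl t - cl s) := by ring
      linarith [hJ1 t, hJlow s]
    intro s t
    rcases le_total (cl s) (cl t) with hle2 | hle2
    · have hk := key s t hle2
      have habs : |cl s - cl t| = cl t - cl s := by
        rw [abs_sub_comm, abs_of_nonneg (sub_nonneg.2 hle2)]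
      calc dist (z s) (z t) ≤ L * (cl t - cl s) + ε := hk
      _ = L * |cl s - cl t| + ε := by rw [habs]
    · have hk := key t s hle2
      have habs : |cl s - cl t| = cl s - cl t := abs_of_nonneg (sub_nonneg.2 hle2)
      calc dist (z s) (z t) = dist (z t) (z s) := dist_comm _ _
      _ ≤ L * (cl s - cl t) + ε := hk
      _ = L * |cl s - cl t| + ε := by rw [habs]


set_option maxHeartbeats 1000000 in
/-- In a proper metric space, if some continuous path from `x` to `y` has finite length,
and `ℓ` is the infimum of the lengths of all continuous paths from `x` to `y`, then
there is a map `q : [0,1] → M` with `q 0 = x`, `q 1 = y`, and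
`dist (q s) (q t) ≤ ℓ * |s - t|`; moreover when `x ≠ y` no such map exists with a
Lipschitz constant strictly smaller than `ℓ`.  Lengths of paths are formalized via
`eVariationOn` over the parameter interval. -/
theorem stmt2 {M : Type*} [MetricSpace M] [ProperSpace M] (x y : M)
    (S : Set ℝ≥0∞)
    (hS : S = {l : ℝ≥0∞ | ∃ a b : ℝ, a ≤ b ∧ ∃ p : ℝ → M,
        ContinuousOn p (Icc a b) ∧ p a = x ∧ p b = y ∧ eVariationOn p (Icc a b) = l})
    (hfin : ∃ l ∈ S, l ≠ ⊤) :
    ∃ q : ℝ → M, q 0 = x ∧ q 1 = y ∧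
      (∀ s ∈ Icc (0 : ℝ) 1, ∀ t ∈ Icc (0 : ℝ) 1,
        dist (q s) (q t) ≤ (sInf S).toReal * |s - t|) ∧
      (x ≠ y → ∀ k : ℝ, k < (sInf S).toReal →
        ¬ ∃ q' : ℝ → M, q' 0 = x ∧ q' 1 = y ∧
          ∀ s ∈ Icc (0 : ℝ) 1, ∀ t ∈ Icc (0 : ℝ) 1,
            dist (q' s) (q' t) ≤ k * |s - t|) := by
  classical
  have hℓtop : sInf S ≠ ⊤ := by
    obtain ⟨l, hlS, hl⟩ := hfin
    exact ne_top_of_le_ne_top hl (sInf_le hlS)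
  set ℓ : ℝ := (sInf S).toReal with hℓdef
  have hℓ0 : 0 ≤ ℓ := ENNReal.toReal_nonneg
  have habs1 : ∀ s t : ℝ, |max 0 (min 1 s) - max 0 (min 1 t)| ≤ 1 := by
    intro s t
    have h1 : (0:ℝ) ≤ max 0 (min 1 s) := le_max_left _ _
    have h2 : max 0 (min 1 s) ≤ 1 := max_le zero_le_one (min_le_left _ _)
    have h3 : (0:ℝ) ≤ max 0 (min 1 t) := le_max_left _ _
    have h4 : max 0 (min 1 t) ≤ 1 := max_le zero_le_one (min_le_left _ _)
    rw [abs_le]; constructor <;> linarith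
  have hZ : ∀ n : ℕ, ∃ z : ℝ → M, z 0 = x ∧ z 1 = y ∧ ∀ s t : ℝ,
      dist (z s) (z t) ≤ ℓ * |max 0 (min 1 s) - max 0 (min 1 t)| + 2/((n:ℝ)+1) := by
    intro n
    set εn : ℝ := 1/((n:ℝ)+1) with hεdef
    have hεpos : 0 < εn := by positivity
    have hlt : sInf S < sInf S + ENNReal.ofReal εn :=
      ENNReal.lt_add_right hℓtop (ENNReal.ofReal_pos.2 hεpos).ne'
    obtain ⟨l, hlS, hllt⟩ := sInf_lt_iff.1 hlt
    rw [hS] at hlS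
    obtain ⟨a, b, hab, p, hcont, hpa, hpb, hlen⟩ := hlS
    have hlne : l ≠ ⊤ := ne_top_of_lt hllt
    have hfin' : eVariationOn p (Icc a b) ≠ ⊤ := hlen ▸ hlne
    have hLle : (eVariationOn p (Icc a b)).toReal ≤ ℓ + εn := by
      have h1 := ENNReal.toReal_mono
        (ENNReal.add_ne_top.2 ⟨hℓtop, ENNReal.ofReal_ne_top⟩) hllt.le
      rw [ENNReal.toReal_add hℓtop ENNReal.ofReal_ne_top,
        ENNReal.toReal_ofReal hεpos.le] at h1
      rw [hlen]
      exact h1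
    obtain ⟨z, hz0, hz1, hzd⟩ := approx' p hab hcont hfin' hεpos
    refine ⟨z, by rw [hz0, hpa], by rw [hz1, hpb], ?_⟩
    intro s t
    have hzd' := hzd s t
    have habs := habs1 s t
    have h2 : 2/((n:ℝ)+1) = εn + εn := by rw [hεdef]; ring
    have hmul : (eVariationOn p (Icc a b)).toReal * |max 0 (min 1 s) - max 0 (min 1 t)|
        ≤ (ℓ + εn) * |max 0 (min 1 s) - max 0 (min 1 t)| :=
      mul_le_mul_of_nonneg_right hLle (abs_nonneg _)
    have hsm : εn * |max 0 (min 1 s) - max 0 (min 1 t)| ≤ εn :=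
      mul_le_of_le_one_right hεpos.le habs
    have hexp : (ℓ + εn) * |max 0 (min 1 s) - max 0 (min 1 t)|
        = ℓ * |max 0 (min 1 s) - max 0 (min 1 t)|
          + εn * |max 0 (min 1 s) - max 0 (min 1 t)| := by ring
    rw [h2]
    linarith
  choose Z hZ0 hZ1 hZd using hZ
  set R : ℝ := ℓ + 2 with hRdef
  have hball : ∀ (n : ℕ) (t : ℝ), Z n t ∈ Metric.closedBall x R := by
    intro n t
    rw [Metric.mem_closedBall, dist_comm]
    have h1 := hZd n 0 t
    rw [hZ0 n] at h1
    have habs := habs1 0 t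
    have h2 : 2/((n:ℝ)+1) ≤ 2 := by
      have hn0 : (0:ℝ) ≤ (n:ℝ) := Nat.cast_nonneg n
      rw [div_le_iff₀ (by linarith)]
      nlinarith
    have h3 : ℓ * |max 0 (min 1 (0:ℝ)) - max 0 (min 1 t)| ≤ ℓ * 1 :=
      mul_le_mul_of_nonneg_left (habs1 0 t) hℓ0
    rw [hRdef]
    linarith
  set U : Ultrafilter ℕ := Ultrafilter.of Filter.atTop with hUdef
  have hUle : (U : Filter ℕ) ≤ Filter.atTop := Ultrafilter.of_le _
  have hcomp : IsCompact (Metric.closedBall x R) := isCompact_closedBall x R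
  have hq : ∀ t : ℝ, ∃ q : M, Filter.Tendsto (fun n => Z n t) U (nhds q) := by
    intro t
    have hle : (Ultrafilter.map (fun n => Z n t) U : Filter M)
        ≤ Filter.principal (Metric.closedBall x R) := by
      rw [Ultrafilter.coe_map, Filter.le_principal_iff, Filter.mem_map]
      exact Filter.univ_mem' fun n => hball n t
    obtain ⟨q, _, hq⟩ := hcomp.ultrafilter_le_nhds _ hle
    rw [Ultrafilter.coe_map] at hq
    exact ⟨q, hq⟩
  choose q hq using hq
  have h20 : Filter.Tendsto (fun n : ℕ => 2/((n:ℝ)+1)) Filter.atTop (nhds 0) := by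
    have := tendsto_one_div_add_atTop_nhds_zero_nat.const_mul (2:ℝ)
    simpa [mul_one_div, div_eq_mul_inv] using this
  refine ⟨q, ?_, ?_, ?_, ?_⟩
  · refine tendsto_nhds_unique (hq 0) ?_
    exact tendsto_const_nhds.congr fun n => (hZ0 n).symm
  · refine tendsto_nhds_unique (hq 1) ?_
    exact tendsto_const_nhds.congr fun n => (hZ1 n).symm
  · intro s hs t ht
    have hdist : Filter.Tendsto (fun n => dist (Z n s) (Z n t)) U
        (nhds (dist (q s) (q t))) := (hq s).dist (hq t)
    have hcls : max 0 (min 1 s) = s := by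
      rw [min_eq_right hs.2, max_eq_right hs.1]
    have hclt : max 0 (min 1 t) = t := by
      rw [min_eq_right ht.2, max_eq_right ht.1]
    have hbound : ∀ n : ℕ, dist (Z n s) (Z n t) ≤ ℓ * |s - t| + 2/((n:ℝ)+1) := by
      intro n
      have := hZd n s t
      rwa [hcls, hclt] at this
    have hlim : Filter.Tendsto (fun n : ℕ => ℓ * |s - t| + 2/((n:ℝ)+1)) (U : Filter ℕ)
        (nhds (ℓ * |s - t|)) := by
      have := (tendsto_const_nhds (x := ℓ * |s - t|) (f := Filter.atTop (α := ℕ))).add h20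
      rw [add_zero] at this
      exact this.mono_left hUle
    exact le_of_tendsto_of_tendsto' hdist hlim hbound
  · rintro hxy k hk ⟨q', hq0', hq1', hlip⟩
    have hdxy : 0 < dist x y := dist_pos.2 hxy
    have hk0 : 0 ≤ k := by
      have h1 := hlip 0 (by norm_num) 1 (by norm_num)
      rw [hq0', hq1'] at h1
      have : |(0:ℝ) - 1| = 1 := by norm_num
      rw [this, mul_one] at h1
      linarith
    have hlip' : LipschitzOnWith (Real.toNNReal k) q' (Icc 0 1) := by
      apply LipschitzOnWith.of_dist_le_mul
      intro s hs t ht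
      have := hlip s hs t ht
      rwa [Real.coe_toNNReal k hk0, Real.dist_eq]
    have hvar : eVariationOn q' (Icc (0:ℝ) 1) ≤ ENNReal.ofReal k := by
      have h1 : eVariationOn (q' ∘ id) (Icc (0:ℝ) 1)
          ≤ (Real.toNNReal k : ℝ≥0∞) * eVariationOn id (Icc (0:ℝ) 1) :=
        hlip'.comp_eVariationOn_le (mapsTo_id _)
      have h2 : eVariationOn (id : ℝ → ℝ) (Icc (0:ℝ) 1) ≤ 1 := by
        have h3 := MonotoneOn.eVariationOn_le (f := (id : ℝ → ℝ)) (s := (univ : Set ℝ))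
          (monotoneOn_id) (mem_univ (0:ℝ)) (mem_univ (1:ℝ))
        simpa using h3
      calc eVariationOn q' (Icc (0:ℝ) 1) = eVariationOn (q' ∘ id) (Icc (0:ℝ) 1) := rfl
      _ ≤ (Real.toNNReal k : ℝ≥0∞) * eVariationOn id (Icc (0:ℝ) 1) := h1
      _ ≤ (Real.toNNReal k : ℝ≥0∞) * 1 := mul_le_mul_right h2 _
      _ = ENNReal.ofReal k := by rw [mul_one]; rfl
    have hmem : eVariationOn q' (Icc (0:ℝ) 1) ∈ S := by
      rw [hS]
      exact ⟨0, 1, zero_le_one, q', hlip'.continuousOn, hq0', hq1', rfl⟩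
    have hle : sInf S ≤ ENNReal.ofReal k := le_trans (sInf_le hmem) hvar
    have : ℓ ≤ k := ENNReal.toReal_le_of_le_ofReal hk0 hle
    linarith
end

section
/- Let (N,ρ) be a complete metric space. Suppose that for every metric space (M,d), every subset Z ⊆ M such that M∖Z consists of a single point, every L ≥ 0, and every map f : Z → N with ρ(f(x),f(y)) ≤ L·d(x,y) for all x,y ∈ Z, there exists an extension of f to M that is Lipschitz with constant L. Then (N,ρ) satisfies the Lipschitz extension property with constant s = 1: for every separable metric space (M,d), every subset Z ⊆ M, every L ≥ 0, and every L-Lipschitz map f : Z → N, there exists an L-Lipschitz extension of f to all of M. -/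
universe u v

/-- If a complete metric space `N` admits Lipschitz-constant-preserving extensions of
Lipschitz maps to a single additional point (for every metric space `M` and every
`Z ⊆ M` whose complement is a single point), then `N` has the Lipschitz extension
property with constant `s = 1` for arbitrary subsets of separable metric spaces. -/
theorem stmt5 {N : Type v} [MetricSpace N] [CompleteSpace N]
    (hyp : ∀ (M : Type u) [MetricSpace M] (Z : Set M), (∃ w : M, (Zᶜ : Set M) = {w}) →
      ∀ L : ℝ, 0 ≤ L → ∀ f : Z → N,
        (∀ x y : Z, dist (f x) (f y) ≤ L * dist (x : M) (y : M)) →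
        ∃ g : M → N, (∀ z : Z, g z = f z) ∧
          ∀ x y : M, dist (g x) (g y) ≤ L * dist x y) :
    ∀ (M : Type u) [MetricSpace M] [TopologicalSpace.SeparableSpace M]
      (Z : Set M) (L : ℝ), 0 ≤ L → ∀ f : Z → N,
        (∀ x y : Z, dist (f x) (f y) ≤ L * dist (x : M) (y : M)) →
        ∃ g : M → N, (∀ z : Z, g z = f z) ∧
          ∀ x y : M, dist (g x) (g y) ≤ L * dist x y := by
  intro M _ _ Z L hL f hf
  classical
  -- partial Lipschitz extensions of f, encoded as graphs
  set S : Set (Set (M × N)) :=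
    {c | (∀ z : Z, ((z : M), f z) ∈ c) ∧
      ∀ p ∈ c, ∀ q ∈ c,
        dist (Prod.snd p) (Prod.snd q) ≤ L * dist (Prod.fst p) (Prod.fst q)} with hS
  have hc0 : (Set.range fun z : Z => ((z : M), f z)) ∈ S := by
    refine ⟨fun z => ⟨z, rfl⟩, ?_⟩
    rintro p ⟨z, rfl⟩ q ⟨w, rfl⟩
    exact hf z w
  have hchain : ∀ c ⊆ S, IsChain (· ⊆ ·) c → c.Nonempty →
      ∃ ub ∈ S, ∀ s ∈ c, s ⊆ ub := by
    intro c hcS hchain ⟨c₀, hc₀⟩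
    refine ⟨⋃₀ c, ⟨?_, ?_⟩, fun s hs => Set.subset_sUnion_of_mem hs⟩
    · intro z; exact ⟨c₀, hc₀, (hcS hc₀).1 z⟩
    · rintro p ⟨a, ha, hpa⟩ q ⟨b, hb, hqb⟩
      rcases hchain.total ha hb with hab | hba
      · exact (hcS hb).2 p (hab hpa) q hqb
      · exact (hcS ha).2 p hpa q (hba hqb)
  obtain ⟨c, hsub, hcS, hmax⟩ := zorn_subset_nonempty S hchain _ hc0
  -- functionality
  have hfun : ∀ x n₁ n₂, (x, n₁) ∈ c → (x, n₂) ∈ c → n₁ = n₂ := by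
    intro x n₁ n₂ h1 h2
    have := hcS.2 _ h1 _ h2
    simp only [dist_self, mul_zero] at this
    exact dist_le_zero.mp (le_trans this (by simp))
  -- the domain of c is everything
  have hdom : ∀ x : M, ∃ n, (x, n) ∈ c := by
    by_contra h
    push_neg at h
    obtain ⟨x₀, hx₀⟩ := h
    set D : Set M := {x | ∃ n, (x, n) ∈ c} with hD
    have hx₀D : x₀ ∉ D := by
      intro ⟨n, hn⟩; exact hx₀ n hn
    set M' := ↥(D ∪ {x₀} : Set M) with hM'
    set Z' : Set M' := {p | (p : M) ∈ D} with hZ'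
    have hcompl : (Z'ᶜ : Set M') = {⟨x₀, Or.inr rfl⟩} := by
      ext p
      simp only [Set.mem_compl_iff, hZ', Set.mem_setOf_eq, Set.mem_singleton_iff]
      constructor
      · intro hp
        rcases p.2 with h | h
        · exact absurd h hp
        · exact Subtype.ext h
      · intro hp
        subst hp
        exact hx₀D
    choose F hF using fun x : D => x.2
    set f' : Z' → N := fun p => F ⟨((p : M') : M), p.2⟩ with hf'
    have hf'mem : ∀ p : Z', (((p : M') : M), f' p) ∈ c := fun p => hF ⟨((p : M') : M), p.2⟩
    have hf'lip : ∀ x y : Z', dist (f' x) (f' y) ≤ L * dist (x : M') (y : M') := by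
      intro x y
      have := hcS.2 _ (hf'mem x) _ (hf'mem y)
      exact this
    obtain ⟨g', hg'ext, hg'lip⟩ := hyp M' Z' ⟨_, hcompl⟩ L hL f' hf'lip
    set w : M' := ⟨x₀, Or.inr rfl⟩ with hw
    set c' : Set (M × N) := insert (x₀, g' w) c with hc'
    have hc'S : c' ∈ S := by
      constructor
      · intro z; exact Set.mem_insert_iff.mpr (Or.inr (hcS.1 z))
      · have key : ∀ q ∈ c, dist (g' w) (Prod.snd q) ≤ L * dist x₀ (Prod.fst q) := by
          intro q hq
          have hq1 : q.1 ∈ D := ⟨q.2, by simpa using hq⟩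
          set q' : M' := ⟨q.1, Or.inl hq1⟩ with hq'
          have hq'Z : q' ∈ Z' := hq1
          have h1 : g' q' = f' ⟨q', hq'Z⟩ := hg'ext ⟨q', hq'Z⟩
          have h2 : f' ⟨q', hq'Z⟩ = q.2 := by
            apply hfun q.1 _ _ (hf'mem ⟨q', hq'Z⟩) (by simpa using hq)
          have := hg'lip w q'
          rw [Subtype.dist_eq] at this
          simpa [h1, h2] using this
        rintro p (rfl | hp) q (rfl | hq)
        · simp [mul_nonneg hL dist_nonneg]
        · exact key q hq
        · have := key p hp
          simpa [dist_comm] using this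
        · exact hcS.2 p hp q hq
    have hcc' : c ⊆ c' := Set.subset_insert _ _
    have : c' ⊆ c := hmax hc'S hcc'
    have hx₀mem : (x₀, g' w) ∈ c := this (Set.mem_insert _ _)
    exact hx₀ _ hx₀mem
  choose g hg using hdom
  refine ⟨g, ?_, ?_⟩
  · intro z; exact hfun _ _ _ (hg z) (hcS.1 z)
  · intro x y; exact hcS.2 _ (hg x) _ (hg y)
end

section
/- Let (N,ρ) be a complete metric space. Suppose that for every family {B̄(u_i, r_i)}_{i∈I} of closed balls in N indexed by an at most countable set I and satisfying ρ(u_i, u_j) ≤ r_i + r_j for all i, j ∈ I, the intersection ⋂_{i∈I} B̄(u_i, r_i) is nonempty. Then (N,ρ) satisfies the Lipschitz extension property with constant s = 1: for every separable metric space (M,d), every subset Z ⊆ M, every L ≥ 0, and every map f : Z → N with ρ(f(x),f(y)) ≤ L·d(x,y) for all x,y ∈ Z, there exists an extension of f to all of M that is Lipschitz with constant L. -/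
/-!
Call `N` countably hyperconvex if every countable family of closed balls whose radii bound the
pairwise distances of their centres, `dist (u i) (u j) ≤ r i + r j`, has a common point.
If `g` is `K`-Lipschitz on a countable set `s` and `x` is a new point, the balls
`closedBall (g y) (K * dist x y)`, `y ∈ s`, form such a family by the triangle inequality, and any
common point is an admissible value of `g` at `x`. Extending one point at a time along an
enumeration handles any countable superset of `s`. In a separable `M`, extend `f` from a countable
dense subset `T` of `Z` to `T ∪ D` with `D` countable and dense in `M`, then to all of `M` by
completeness of `N`; the result agrees with `f` on `Z` since both are continuous there and agree
on `T`.
-/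

universe u v

open Set Metric TopologicalSpace
open scoped NNReal

def CountablyHyperconvex (N : Type*) [PseudoMetricSpace N] : Prop :=
  ∀ (ι : Type) [Countable ι] (u : ι → N) (r : ι → ℝ),
    (∀ i j : ι, dist (u i) (u j) ≤ r i + r j) → (⋂ i : ι, closedBall (u i) (r i)).Nonempty

theorem exists_lipschitzOnWith_iUnion_of_monotone {M N : Type*} [PseudoEMetricSpace M]
    [PseudoEMetricSpace N] {K : ℝ≥0} {P : ℕ → Set M} (hP : Monotone P) {G : ℕ → M → N}
    (hG : ∀ n, LipschitzOnWith K (G n) (P n)) (hGG : ∀ n, EqOn (G (n + 1)) (G n) (P n)) :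
    ∃ g, (∀ n, EqOn g (G n) (P n)) ∧ LipschitzOnWith K g (⋃ n, P n) := by
  classical
  have hstable {m n : ℕ} (hmn : m ≤ n) : EqOn (G n) (G m) (P m) := by
    induction hmn with
    | refl => exact eqOn_refl _ _
    | step hmn ih => exact ((hGG _).mono (hP hmn)).trans ih
  let g x := if hx : ∃ n, x ∈ P n then G hx.choose x else G 0 x
  have hg (n : ℕ) : EqOn g (G n) (P n) := fun x hx => by
    have hx' : ∃ n, x ∈ P n := ⟨n, hx⟩
    simp only [g, dif_pos hx']
    rcases le_total n hx'.choose with hle | hle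
    · exact hstable hle hx
    · exact (hstable hle hx'.choose_spec).symm
  refine ⟨g, hg, fun x hx y hy => ?_⟩
  obtain ⟨m, hxm⟩ := mem_iUnion.1 hx
  obtain ⟨n, hyn⟩ := mem_iUnion.1 hy
  have hx' := hP (le_max_left m n) hxm
  have hy' := hP (le_max_right m n) hyn
  rw [hg _ hx', hg _ hy']
  exact hG _ hx' hy'

namespace CountablyHyperconvex

section

variable {M N : Type*} [PseudoMetricSpace M] [PseudoMetricSpace N]

theorem nonempty (h : CountablyHyperconvex N) : Nonempty N := by
  obtain ⟨p, -⟩ := h PEmpty PEmpty.elim PEmpty.elim (fun i => i.elim)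
  exact ⟨p⟩

theorem nonempty_iInter_closedBall (h : CountablyHyperconvex N) {ι : Type*} [Countable ι]
    (u : ι → N) (r : ι → ℝ) (hur : ∀ i j, dist (u i) (u j) ≤ r i + r j) :
    (⋂ i, closedBall (u i) (r i)).Nonempty := by
  let e : Shrink.{0} ι ≃ ι := (equivShrink.{0} ι).symm
  have := e.injective.countable
  have key := h (Shrink.{0} ι) (fun i => u (e i)) (fun i => r (e i)) fun i j => hur _ _
  rwa [e.surjective.iInter_comp fun i => closedBall (u i) (r i)] at key

variable {K : ℝ≥0}

theorem exists_forall_dist_le_mul (h : CountablyHyperconvex N) {s : Set M} (hs : s.Countable)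
    {g : M → N} (hg : LipschitzOnWith K g s) (x : M) :
    ∃ p, ∀ y ∈ s, dist p (g y) ≤ K * dist x y := by
  have := hs.to_subtype
  obtain ⟨p, hp⟩ := h.nonempty_iInter_closedBall (fun y : s => g y) (fun y => K * dist x y)
    fun y z => calc
      dist (g y) (g z) ≤ K * dist (y : M) z := hg.dist_le_mul y y.2 z z.2
      _ ≤ K * (dist x y + dist x z) := by gcongr; exact dist_triangle_left _ _ _
      _ = _ := mul_add _ _ _
  exact ⟨p, fun y hy => mem_closedBall.1 (mem_iInter.1 hp ⟨y, hy⟩)⟩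

theorem exists_lipschitzOnWith_insert (h : CountablyHyperconvex N) {s : Set M}
    (hs : s.Countable) {g : M → N} (hg : LipschitzOnWith K g s) (x : M) :
    ∃ g', EqOn g' g s ∧ LipschitzOnWith K g' (insert x s) := by
  classical
  by_cases hx : x ∈ s
  · exact ⟨g, eqOn_refl g s, by rwa [insert_eq_of_mem hx]⟩
  obtain ⟨p, hp⟩ := h.exists_forall_dist_le_mul hs hg x
  have hupd : EqOn (Function.update g x p) g s := fun y hy =>
    Function.update_of_ne (ne_of_mem_of_not_mem hy hx) _ _
  refine ⟨Function.update g x p, hupd, LipschitzOnWith.of_dist_le_mul ?_⟩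
  rintro y (rfl | hy) z (rfl | hz)
  · simp
  · rw [Function.update_self, hupd hz]; exact hp z hz
  · rw [Function.update_self, hupd hy, dist_comm, dist_comm y]; exact hp y hy
  · rw [hupd hy, hupd hz]; exact hg.dist_le_mul y hy z hz

theorem exists_lipschitzOnWith_union (h : CountablyHyperconvex N) {s t : Set M}
    (hs : s.Countable) (ht : t.Countable) {g : M → N} (hg : LipschitzOnWith K g s) :
    ∃ g', EqOn g' g s ∧ LipschitzOnWith K g' (s ∪ t) := by
  rcases t.eq_empty_or_nonempty with rfl | hne
  · exact ⟨g, eqOn_refl g s, by rwa [union_empty]⟩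
  obtain ⟨e, rfl⟩ := ht.exists_eq_range hne
  let P n : Set M := s ∪ e '' ↑(Finset.range n)
  have hP : Monotone P := fun m n hmn => union_subset_union_right _ <|
    image_mono <| Finset.coe_subset.2 <| Finset.range_mono hmn
  have hPsucc n : P (n + 1) = insert (e n) (P n) := by
    simp only [P, Finset.range_add_one, Finset.coe_insert, image_insert_eq, union_insert]
  have hPc n : (P n).Countable := hs.union ((Finset.finite_toSet _).image e).countable
  choose! F hF using fun n (g : M → N) (hg : LipschitzOnWith K g (P n)) =>
    h.exists_lipschitzOnWith_insert (hPc n) hg (e n)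
  let G n : M → N := Nat.rec g (fun n G => F n G) n
  have hG n : LipschitzOnWith K (G n) (P n) := by
    induction n with
    | zero => simpa [P, G] using hg
    | succ n ih => rw [hPsucc]; exact (hF n (G n) ih).2
  obtain ⟨g', hg'G, hg'⟩ := exists_lipschitzOnWith_iUnion_of_monotone hP hG
    fun n => (hF n (G n) (hG n)).1
  refine ⟨g', (hg'G 0).mono subset_union_left, hg'.mono ?_⟩
  rintro x (hx | ⟨n, rfl⟩)
  · exact mem_iUnion.2 ⟨0, subset_union_left hx⟩
  · exact mem_iUnion.2 ⟨n + 1, by rw [hPsucc]; exact mem_insert _ _⟩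

end

theorem exists_lipschitzWith_eqOn {M N : Type*} [PseudoMetricSpace M] [SeparableSpace M]
    [MetricSpace N] [CompleteSpace N] (h : CountablyHyperconvex N) {K : ℝ≥0} {Z : Set M}
    {f : M → N} (hf : LipschitzOnWith K f Z) : ∃ g, LipschitzWith K g ∧ EqOn g f Z := by
  obtain ⟨T, hTZ, hTc, hZT⟩ := (IsSeparable.of_separableSpace Z).exists_countable_dense_subset
  obtain ⟨D, hDc, hD⟩ := exists_countable_dense M
  obtain ⟨g₀, hg₀f, hg₀⟩ := h.exists_lipschitzOnWith_union hTc hDc (hf.mono hTZ)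
  have hTD : Dense (T ∪ D) := hD.mono subset_union_right
  set g := hTD.extend ((T ∪ D).domRestrict g₀)
  have hg : LipschitzWith K g := hTD.lipschitzWith_extend hg₀.to_restrict
  have hgg₀ : EqOn g g₀ (T ∪ D) := fun x hx =>
    hTD.extend_eq hg₀.to_restrict.continuous ⟨x, hx⟩
  refine ⟨g, hg, ?_⟩
  exact ((hgg₀.mono subset_union_left).trans hg₀f).of_subset_closure hg.continuous.continuousOn
    hf.continuousOn hTZ hZT

end CountablyHyperconvex

/-- Let `N` be a complete metric space in which every at most countable family of closed
balls `B̄(u i, r i)` with `dist (u i) (u j) ≤ r i + r j` for all `i, j` has nonempty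
intersection.  Then `N` has the Lipschitz extension property with constant `s = 1`:
every `L`-Lipschitz map from a subset `Z` of a separable metric space `M` into `N`
extends to an `L`-Lipschitz map on all of `M`. -/
theorem stmt6 {N : Type v} [MetricSpace N] [CompleteSpace N]
    (hball : ∀ (ι : Type) [Countable ι] (u : ι → N) (r : ι → ℝ),
      (∀ i j : ι, dist (u i) (u j) ≤ r i + r j) →
      (⋂ i : ι, Metric.closedBall (u i) (r i)).Nonempty) :
    ∀ (M : Type u) [MetricSpace M] [TopologicalSpace.SeparableSpace M]
      (Z : Set M) (L : ℝ), 0 ≤ L → ∀ f : Z → N,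
        (∀ x y : Z, dist (f x) (f y) ≤ L * dist (x : M) (y : M)) →
        ∃ g : M → N, (∀ z : Z, g z = f z) ∧
          ∀ x y : M, dist (g x) (g y) ≤ L * dist x y := by
  intro M _ _ Z L hL f hf
  have hN : CountablyHyperconvex N := hball
  have := hN.nonempty
  let f' : M → N := Function.extend Subtype.val f fun _ => Classical.arbitrary N
  have hf'f (z : Z) : f' z = f z := Subtype.val_injective.extend_apply _ _ _
  have hf' : LipschitzOnWith ⟨L, hL⟩ f' Z := LipschitzOnWith.of_dist_le_mul fun x hx y hy => by
    rw [hf'f ⟨x, hx⟩, hf'f ⟨y, hy⟩]; exact hf ⟨x, hx⟩ ⟨y, hy⟩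
  obtain ⟨g, hg, hgf'⟩ := hN.exists_lipschitzWith_eqOn hf'
  exact ⟨g, fun z => (hgf' z.2).trans (hf'f z), hg.dist_le_mul⟩
end

section
/- Fix α with 0 < α < 1, let (a_n)_{n≥0} be a sequence of complex numbers with A = sup_{n≥0} |a_n| < ∞, and define f : ℝ → ℂ by f(x) = Σ_{n=0}^∞ a_n·2^{−nα}·exp(2^n·i·x) (the series converges absolutely for each x). Then for all x, y ∈ ℝ, |f(x) − f(y)| ≤ A·(2^{1+α}·(1 − 2^{−α})^{−1} + 2^{−(1−α)}·(1 − 2^{−(1−α)})^{−1})·|x − y|^α. In particular f is Lipschitz of order α. -/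
lemma expLip (c x y : ℝ) (hc : 0 ≤ c) :
    ‖Complex.exp ((c : ℂ) * Complex.I * x) - Complex.exp ((c : ℂ) * Complex.I * y)‖ ≤
      c * |x - y| := by
  have hd : ∀ t : ℝ, HasDerivAt (fun t : ℝ => Complex.exp ((c : ℂ) * Complex.I * t))
      (Complex.exp ((c : ℂ) * Complex.I * t) * ((c : ℂ) * Complex.I)) t := by
    intro t
    have h0 : HasDerivAt (fun t : ℝ => (t : ℂ)) 1 t := Complex.ofRealCLM.hasDerivAt
    have h1 := h0.const_mul ((c : ℂ) * Complex.I)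
    simpa [mul_comm] using h1.cexp
  have key := convex_univ.norm_image_sub_le_of_norm_hasDerivWithin_le
      (f := fun t : ℝ => Complex.exp ((c : ℂ) * Complex.I * t))
      (f' := fun t : ℝ => Complex.exp ((c : ℂ) * Complex.I * t) * ((c : ℂ) * Complex.I))
      (fun t _ => (hd t).hasDerivWithinAt) (C := c) (fun t _ => ?_) (Set.mem_univ y) (Set.mem_univ x)
  · simpa [Real.norm_eq_abs, abs_sub_comm] using key
  · have : (c : ℂ) * Complex.I * t = ((c * t : ℝ) : ℂ) * Complex.I := by push_cast; ring
    rw [norm_mul, this, Complex.norm_exp_ofReal_mul_I, one_mul]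
    simp [Complex.norm_def, Complex.normSq_mul, abs_of_nonneg hc]

set_option maxHeartbeats 1000000 in
/-- For `0 < α < 1` and a bounded sequence `(a n)` with `|a n| ≤ A`, the lacunary series
`f x = Σ a n 2^{-nα} exp(2^n i x)` satisfies
`|f x - f y| ≤ A (2^{1+α}(1 - 2^{-α})⁻¹ + 2^{-(1-α)}(1 - 2^{-(1-α)})⁻¹) |x - y|^α`,
so `f` is Lipschitz of order `α`. -/
theorem stmt11 (α : ℝ) (hα0 : 0 < α) (hα1 : α < 1)
    (a : ℕ → ℂ) (A : ℝ) (hA : ∀ n : ℕ, ‖a n‖ ≤ A)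
    (f : ℝ → ℂ)
    (hf : f = fun x : ℝ => ∑' n : ℕ,
      a n * (((2 : ℝ) ^ (-(n : ℝ) * α) : ℝ) : ℂ) * Complex.exp ((2 : ℂ) ^ n * Complex.I * x)) :
    ∀ x y : ℝ, ‖f x - f y‖ ≤
      A * ((2 : ℝ) ^ (1 + α) * (1 - (2 : ℝ) ^ (-α))⁻¹
        + (2 : ℝ) ^ (-(1 - α)) * (1 - (2 : ℝ) ^ (-(1 - α)))⁻¹) * |x - y| ^ α := by
  intro x y
  have h2 : (0:ℝ) < 2 := two_pos
  have hA0 : 0 ≤ A := le_trans (norm_nonneg _) (hA 0)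
  set δ := |x - y| with hδdef
  have hδ0 : 0 ≤ δ := abs_nonneg _
  set r : ℝ := (2:ℝ) ^ (-α) with hrdef
  set s : ℝ := (2:ℝ) ^ (1 - α) with hsdef
  have hr0 : 0 < r := Real.rpow_pos_of_pos h2 _
  have hr1 : r < 1 := Real.rpow_lt_one_of_one_lt_of_neg one_lt_two (by linarith)
  have hs1 : 1 < s := Real.one_lt_rpow_iff_of_pos h2 |>.2 (Or.inl ⟨one_lt_two, by linarith⟩)
  have hs0 : 0 < s := lt_trans one_pos hs1
  have h2r : 2 * r = s := by
    rw [hrdef, hsdef]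
    rw [show (1 : ℝ) - α = 1 + (-α) by ring, Real.rpow_add h2, Real.rpow_one]
  -- the summand
  set t : ℝ → ℕ → ℂ := fun z n => a n * (((2 : ℝ) ^ (-(n : ℝ) * α) : ℝ) : ℂ) *
      Complex.exp ((2 : ℂ) ^ n * Complex.I * z) with htdef
  have hcoef : ∀ n : ℕ, (2:ℝ) ^ (-(n:ℝ) * α) = r ^ n := by
    intro n
    rw [hrdef, ← Real.rpow_natCast ((2:ℝ) ^ (-α)) n, ← Real.rpow_mul (by norm_num)]
    ring_nf
  have hexp1 : ∀ (z : ℝ) (n : ℕ),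
      ‖Complex.exp ((2 : ℂ) ^ n * Complex.I * z)‖ = 1 := by
    intro z n
    have h : (2 : ℂ) ^ n * Complex.I * z = (((2:ℝ) ^ n * z : ℝ) : ℂ) * Complex.I := by
      push_cast; ring
    rw [h, Complex.norm_exp_ofReal_mul_I]
  have htnorm : ∀ z n, ‖t z n‖ = ‖a n‖ * r ^ n := by
    intro z n
    rw [htdef]
    simp only [norm_mul, hexp1, mul_one, Complex.norm_real, Real.norm_eq_abs, hcoef,
      abs_of_nonneg (pow_nonneg hr0.le n)]
  have hsum : ∀ z : ℝ, Summable (t z) := by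
    intro z
    apply Summable.of_norm_bounded ((summable_geometric_of_lt_one hr0.le hr1).mul_left A)
    intro n
    rw [htnorm]
    exact mul_le_mul_of_nonneg_right (hA n) (pow_nonneg hr0.le n)
  set g : ℕ → ℝ := fun n => ‖t x n - t y n‖ with hgdef
  have hg2 : ∀ n, g n ≤ 2 * A * r ^ n := by
    intro n
    calc g n ≤ ‖t x n‖ + ‖t y n‖ := norm_sub_le _ _
      _ ≤ A * r ^ n + A * r ^ n := by
          rw [htnorm, htnorm]
          have := pow_nonneg hr0.le n
          gcongr <;> exact hA n
      _ = 2 * A * r ^ n := by ring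
  have hghead : ∀ n, g n ≤ A * δ * s ^ n := by
    intro n
    have hfac : t x n - t y n = a n * (((2 : ℝ) ^ (-(n : ℝ) * α) : ℝ) : ℂ) *
        (Complex.exp ((2 : ℂ) ^ n * Complex.I * x) - Complex.exp ((2 : ℂ) ^ n * Complex.I * y)) := by
      rw [htdef]; ring
    have hc : (0:ℝ) ≤ (2:ℝ) ^ n := pow_nonneg h2.le n
    have hcast : ∀ z : ℝ, (2 : ℂ) ^ n * Complex.I * z = (((2:ℝ)^n : ℝ) : ℂ) * Complex.I * z := by
      intro z; push_cast; ring
    have hlip := expLip ((2:ℝ)^n) x y hc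
    rw [← hcast x, ← hcast y] at hlip
    calc g n = ‖a n‖ * r ^ n *
          ‖Complex.exp ((2 : ℂ) ^ n * Complex.I * x) -
            Complex.exp ((2 : ℂ) ^ n * Complex.I * y)‖ := by
          rw [hgdef]
          simp only [hfac, norm_mul, Complex.norm_real, Real.norm_eq_abs, hcoef,
            abs_of_nonneg (pow_nonneg hr0.le n)]
      _ ≤ A * r ^ n * ((2:ℝ)^n * δ) := by
          apply mul_le_mul
          · exact mul_le_mul_of_nonneg_right (hA n) (pow_nonneg hr0.le n)
          · exact hlip
          · exact norm_nonneg _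
          · positivity
      _ = A * δ * (2 * r) ^ n := by rw [mul_pow]; ring
      _ = A * δ * s ^ n := by rw [h2r]
  have hgsum : Summable g := by
    apply Summable.of_nonneg_of_le (fun n => norm_nonneg _) hg2
    exact (summable_geometric_of_lt_one hr0.le hr1).mul_left (2 * A)
  -- main split bound
  have key : ∀ N : ℕ, ‖f x - f y‖ ≤
      A * δ * (∑ n ∈ Finset.range N, s ^ n) + 2 * A * r ^ N * (1 - r)⁻¹ := by
    intro N
    have hfxy : ‖f x - f y‖ ≤ ∑' n, g n := by
      have hsub : f x - f y = ∑' n, (t x n - t y n) := by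
        rw [hf]
        exact (Summable.tsum_sub (hsum x) (hsum y)).symm
      have hnorm : Summable fun n => ‖t x n - t y n‖ := by
        exact hgsum
      rw [hsub]
      exact norm_tsum_le_tsum_norm hnorm
    have hsplit := Summable.sum_add_tsum_nat_add N hgsum
    have hhead : ∑ n ∈ Finset.range N, g n ≤ A * δ * (∑ n ∈ Finset.range N, s ^ n) := by
      rw [Finset.mul_sum]
      exact Finset.sum_le_sum fun n _ => hghead n
    have htail : ∑' i : ℕ, g (i + N) ≤ 2 * A * r ^ N * (1 - r)⁻¹ := by
      have hb : ∀ i : ℕ, g (i + N) ≤ 2 * A * r ^ N * r ^ i := by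
        intro i
        calc g (i + N) ≤ 2 * A * r ^ (i + N) := hg2 _
          _ = 2 * A * r ^ N * r ^ i := by rw [pow_add]; ring
      calc ∑' i : ℕ, g (i + N) ≤ ∑' i : ℕ, 2 * A * r ^ N * r ^ i := by
            apply Summable.tsum_le_tsum hb ((summable_nat_add_iff N).mpr hgsum)
            exact (summable_geometric_of_lt_one hr0.le hr1).mul_left _
        _ = 2 * A * r ^ N * (1 - r)⁻¹ := by
            rw [tsum_mul_left, tsum_geometric_of_lt_one hr0.le hr1]
    calc ‖f x - f y‖ ≤ ∑' n, g n := hfxy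
      _ = ∑ n ∈ Finset.range N, g n + ∑' i : ℕ, g (i + N) := hsplit.symm
      _ ≤ _ := add_le_add hhead htail
  -- constants
  set u : ℝ := (2:ℝ) ^ (-(1 - α)) with hudef
  have hu0 : 0 < u := Real.rpow_pos_of_pos h2 _
  have hu1 : u < 1 := Real.rpow_lt_one_of_one_lt_of_neg one_lt_two (by linarith)
  have hus : u = s⁻¹ := by rw [hudef, hsdef, Real.rpow_neg h2.le]
  have hrinv : 0 ≤ (1 - r)⁻¹ := inv_nonneg.2 (by linarith)
  have huinv : 0 ≤ (1 - u)⁻¹ := inv_nonneg.2 (by linarith)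
  have hC2 : 0 ≤ u * (1 - u)⁻¹ := mul_nonneg hu0.le huinv
  have hC1 : 0 ≤ (2:ℝ) ^ (1 + α) * (1 - r)⁻¹ :=
    mul_nonneg (Real.rpow_nonneg h2.le _) hrinv
  rcases eq_or_lt_of_le hδ0 with h0 | hδpos
  · -- δ = 0, so x = y
    have hxy : x = y := by
      have : |x - y| = 0 := h0.symm
      rwa [abs_eq_zero, sub_eq_zero] at this
    rw [hxy, sub_self, norm_zero]
    have : (0:ℝ) ≤ δ ^ α := Real.rpow_nonneg hδ0 _
    have := mul_nonneg (mul_nonneg hA0 (add_nonneg hC1 hC2)) this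
    linarith
  · by_cases hδ1 : 1 ≤ δ
    · -- large δ: take N = 0
      have hkey := key 0
      simp only [Finset.range_zero, Finset.sum_empty, mul_zero, pow_zero, mul_one,
        zero_add] at hkey
      have hδα : 1 ≤ δ ^ α := Real.one_le_rpow hδ1 hα0.le
      have h2a : (2:ℝ) ≤ (2:ℝ) ^ (1 + α) := by
        calc (2:ℝ) = (2:ℝ) ^ (1:ℝ) := (Real.rpow_one 2).symm
          _ ≤ (2:ℝ) ^ (1 + α) := Real.rpow_le_rpow_of_exponent_le one_le_two (by linarith)
      have hstep : 2 * (1 - r)⁻¹ ≤ (2:ℝ) ^ (1 + α) * (1 - r)⁻¹ * (δ ^ α) := by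
        calc 2 * (1 - r)⁻¹ = 2 * (1 - r)⁻¹ * 1 := by ring
          _ ≤ (2:ℝ) ^ (1 + α) * (1 - r)⁻¹ * (δ ^ α) := by
              apply mul_le_mul (mul_le_mul_of_nonneg_right h2a hrinv) hδα one_pos.le
              exact mul_nonneg (Real.rpow_nonneg h2.le _) hrinv
      have h2' := mul_le_mul_of_nonneg_left hstep hA0
      have h3 : 0 ≤ A * (u * (1 - u)⁻¹) * δ ^ α :=
        mul_nonneg (mul_nonneg hA0 hC2) (Real.rpow_nonneg hδ0 _)
      calc ‖f x - f y‖ ≤ 2 * A * (1 - r)⁻¹ := hkey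
        _ = A * (2 * (1 - r)⁻¹) := by ring
        _ ≤ A * ((2:ℝ) ^ (1 + α) * (1 - r)⁻¹ * δ ^ α) := h2'
        _ ≤ A * ((2:ℝ) ^ (1 + α) * (1 - r)⁻¹ + u * (1 - u)⁻¹) * δ ^ α := by nlinarith
    · -- small δ
      push_neg at hδ1
      have hδinv : 1 < δ⁻¹ := (one_lt_inv₀ hδpos).2 hδ1
      set N : ℕ := ⌊Real.logb 2 δ⁻¹⌋₊ with hNdef
      have hlog0 : 0 ≤ Real.logb 2 δ⁻¹ := Real.logb_nonneg one_lt_two hδinv.le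
      have hrlog : (2:ℝ) ^ Real.logb 2 δ⁻¹ = δ⁻¹ :=
        Real.rpow_logb h2 (by norm_num) (inv_pos.2 hδpos)
      have e1 : (2:ℝ) ^ (N:ℝ) ≤ δ⁻¹ := by
        rw [← hrlog]
        exact Real.rpow_le_rpow_of_exponent_le one_le_two (Nat.floor_le hlog0)
      have e2 : δ⁻¹ ≤ (2:ℝ) ^ ((N:ℝ) + 1) := by
        rw [← hrlog]
        exact Real.rpow_le_rpow_of_exponent_le one_le_two (Nat.lt_floor_add_one _).le
      have d1 : (2:ℝ) ^ (-(N:ℝ)) ≤ 2 * δ := by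
        have hp : (0:ℝ) < (2:ℝ) ^ ((N:ℝ) + 1) := Real.rpow_pos_of_pos h2 _
        have h' : ((2:ℝ) ^ ((N:ℝ) + 1))⁻¹ ≤ δ := by
          rw [inv_le_comm₀ hp hδpos]
          exact e2
        have : (2:ℝ) ^ (-(N:ℝ)) = 2 * ((2:ℝ) ^ ((N:ℝ) + 1))⁻¹ := by
          rw [← Real.rpow_neg h2.le, show -((N:ℝ) + 1) = -(N:ℝ) + (-1) by ring,
            Real.rpow_add h2, Real.rpow_neg_one]
          ring
        rw [this]
        linarith
      -- tail estimate
      have hrN : r ^ N = ((2:ℝ) ^ (-(N:ℝ))) ^ α := by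
        rw [hrdef, ← Real.rpow_natCast ((2:ℝ) ^ (-α)) N, ← Real.rpow_mul h2.le,
          ← Real.rpow_mul h2.le]
        ring_nf
      have htail_le : r ^ N ≤ (2:ℝ) ^ α * δ ^ α := by
        rw [hrN, ← Real.mul_rpow h2.le hδ0]
        exact Real.rpow_le_rpow (Real.rpow_nonneg h2.le _) d1 hα0.le
      have htail2 : 2 * A * r ^ N * (1 - r)⁻¹ ≤
          A * ((2:ℝ) ^ (1 + α) * (1 - r)⁻¹) * δ ^ α := by
        have h2pow : 2 * (2:ℝ) ^ α = (2:ℝ) ^ (1 + α) := by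
          rw [Real.rpow_add h2, Real.rpow_one]
        calc 2 * A * r ^ N * (1 - r)⁻¹ ≤ 2 * A * ((2:ℝ) ^ α * δ ^ α) * (1 - r)⁻¹ := by
              apply mul_le_mul_of_nonneg_right _ hrinv
              exact mul_le_mul_of_nonneg_left htail_le (by positivity)
          _ = A * ((2 * (2:ℝ) ^ α) * (1 - r)⁻¹) * δ ^ α := by ring
          _ = A * ((2:ℝ) ^ (1 + α) * (1 - r)⁻¹) * δ ^ α := by rw [h2pow]
      -- head estimate
      have hsN : s ^ N ≤ δ ^ (α - 1) := by
        have h1' : s ^ N = ((2:ℝ) ^ (N:ℝ)) ^ (1 - α) := by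
          rw [hsdef, ← Real.rpow_natCast ((2:ℝ) ^ (1 - α)) N, ← Real.rpow_mul h2.le,
            ← Real.rpow_mul h2.le]
          ring_nf
        rw [h1']
        calc ((2:ℝ) ^ (N:ℝ)) ^ (1 - α) ≤ (δ⁻¹) ^ (1 - α) :=
              Real.rpow_le_rpow (Real.rpow_nonneg h2.le _) e1 (by linarith)
          _ = δ ^ (α - 1) := by
              rw [← Real.rpow_neg_one δ, ← Real.rpow_mul hδ0]
              ring_nf
      have hhead2 : A * δ * (∑ n ∈ Finset.range N, s ^ n) ≤ A * (u * (1 - u)⁻¹) * δ ^ α := by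
        have hgeom : ∑ n ∈ Finset.range N, s ^ n = (s ^ N - 1) / (s - 1) :=
          geom_sum_eq hs1.ne' N
        have hs1' : 0 < s - 1 := by linarith
        have hsum_le : ∑ n ∈ Finset.range N, s ^ n ≤ δ ^ (α - 1) / (s - 1) := by
          rw [hgeom]
          have h' : s ^ N - 1 ≤ δ ^ (α - 1) := by linarith
          gcongr
        have hδα : δ * δ ^ (α - 1) = δ ^ α := by
          have h' := Real.rpow_add hδpos 1 (α - 1)
          rw [Real.rpow_one] at h'
          rw [← h']
          ring_nf
        have hsinv : (s - 1)⁻¹ = u * (1 - u)⁻¹ := by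
          rw [hus, show (1 : ℝ) - s⁻¹ = (s - 1) / s by field_simp, inv_div]
          field_simp
        calc A * δ * (∑ n ∈ Finset.range N, s ^ n)
            ≤ A * δ * (δ ^ (α - 1) / (s - 1)) := by
              apply mul_le_mul_of_nonneg_left hsum_le (by positivity)
          _ = A * (δ * δ ^ (α - 1)) * (s - 1)⁻¹ := by ring
          _ = A * (u * (1 - u)⁻¹) * δ ^ α := by rw [hδα, hsinv]; ring
      calc ‖f x - f y‖
          ≤ A * δ * (∑ n ∈ Finset.range N, s ^ n) + 2 * A * r ^ N * (1 - r)⁻¹ := key N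
        _ ≤ A * (u * (1 - u)⁻¹) * δ ^ α + A * ((2:ℝ) ^ (1 + α) * (1 - r)⁻¹) * δ ^ α :=
            add_le_add hhead2 htail2
        _ = A * ((2:ℝ) ^ (1 + α) * (1 - r)⁻¹ + u * (1 - u)⁻¹) * δ ^ α := by ring
end

section
/- Fix α with 0 < α < 1, let (a_n)_{n≥0} be a bounded sequence of complex numbers, and let f(x) = Σ_{n=0}^∞ a_n·2^{−nα}·exp(2^n·i·x), which satisfies |f(x) − f(y)| ≤ H·|x − y|^α for all x, y ∈ ℝ and some finite H. Let ψ : ℝ → ℂ be an integrable function such that ∫_ℝ |x|^α·|ψ(x)| dx < ∞ and whose Fourier transform ψ̂(ξ) = ∫_ℝ exp(i·ξ·x)·ψ(x) dx satisfies ψ̂(1) = 1 and ψ̂(ξ) = 0 for all ξ ∈ [0, 1/2] ∪ [2, ∞). Then for every nonnegative integer j, with ψ_{2^j}(x) = 2^j·ψ(2^j·x), one has ∫_ℝ f(x)·ψ_{2^j}(x) dx = a_j·2^{−jα}, and consequently |a_j| ≤ H·∫_ℝ |x|^α·|ψ(x)| dx. -/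
open MeasureTheory

/-- Let `f x = Σ a n 2^{-nα} exp(2^n i x)` with `(a n)` bounded and `0 < α < 1`, and
suppose `f` is Hölder of order `α` with constant `H`.  If `ψ` is integrable with
`∫ |x|^α |ψ x| dx < ∞`, and its Fourier transform `ψ̂ ξ = ∫ exp(iξx) ψ x dx` satisfies
`ψ̂ 1 = 1` and `ψ̂ ξ = 0` for `ξ ∈ [0,1/2] ∪ [2,∞)`, then for every `j ∈ ℕ`, with
`ψ_{2^j}(x) = 2^j ψ(2^j x)`, one has `∫ f x ψ_{2^j}(x) dx = a j 2^{-jα}` and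
consequently `|a j| ≤ H ∫ |x|^α |ψ x| dx`. -/
theorem stmt12 (α : ℝ) (hα0 : 0 < α) (hα1 : α < 1)
    (a : ℕ → ℂ) (A : ℝ) (hA : ∀ n : ℕ, ‖a n‖ ≤ A)
    (f : ℝ → ℂ)
    (hf : f = fun x : ℝ => ∑' n : ℕ,
      a n * (((2 : ℝ) ^ (-(n : ℝ) * α) : ℝ) : ℂ) * Complex.exp ((2 : ℂ) ^ n * Complex.I * x))
    (H : ℝ)
    (hHolder : ∀ x y : ℝ, ‖f x - f y‖ ≤ H * |x - y| ^ α)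
    (ψ : ℝ → ℂ) (hψint : Integrable ψ)
    (hmom : Integrable (fun x : ℝ => |x| ^ α * ‖ψ x‖))
    (ψhat : ℝ → ℂ)
    (hψhat : ψhat = fun ξ : ℝ => ∫ x : ℝ, Complex.exp (Complex.I * ξ * x) * ψ x)
    (h1 : ψhat 1 = 1)
    (h0 : ∀ ξ : ℝ, (0 ≤ ξ ∧ ξ ≤ 1 / 2) ∨ 2 ≤ ξ → ψhat ξ = 0) :
    ∀ j : ℕ,
      (∫ x : ℝ, f x * ((2 : ℂ) ^ j * ψ ((2 : ℝ) ^ j * x)))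
          = a j * (((2 : ℝ) ^ (-(j : ℝ) * α) : ℝ) : ℂ) ∧
      ‖a j‖ ≤ H * ∫ x : ℝ, |x| ^ α * ‖ψ x‖ := by
  have hA0 : 0 ≤ A := le_trans (norm_nonneg _) (hA 0)
  set r : ℝ := (2:ℝ) ^ (-α) with hr
  have hr0 : 0 < r := Real.rpow_pos_of_pos two_pos _
  have hr1 : r < 1 := Real.rpow_lt_one_of_one_lt_of_neg one_lt_two (by linarith)
  have hrn : ∀ n : ℕ, (2:ℝ) ^ (-(n:ℝ) * α) = r ^ n := by
    intro n
    rw [hr, ← Real.rpow_natCast ((2:ℝ)^(-α)) n, ← Real.rpow_mul (by norm_num)]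
    ring_nf
  have hrnpos : ∀ n : ℕ, (0:ℝ) < (2:ℝ) ^ (-(n:ℝ) * α) := fun n =>
    Real.rpow_pos_of_pos two_pos _
  have hsum_r : Summable fun n : ℕ => A * r ^ n :=
    (summable_geometric_of_lt_one hr0.le hr1).mul_left A
  -- the terms of the series
  set T : ℕ → ℝ → ℂ := fun n x =>
    a n * (((2 : ℝ) ^ (-(n : ℝ) * α) : ℝ) : ℂ) * Complex.exp ((2 : ℂ) ^ n * Complex.I * x)
    with hT
  have hexp1 : ∀ (n : ℕ) (x : ℝ),
      ‖Complex.exp ((2:ℂ)^n * Complex.I * x)‖ = 1 := by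
    intro n x
    rw [show (2:ℂ)^n * Complex.I * x = (((2:ℝ)^n * x : ℝ) : ℂ) * Complex.I by
      push_cast; ring]
    exact Complex.norm_exp_ofReal_mul_I _
  have hTnorm : ∀ (n : ℕ) (x : ℝ),
      ‖T n x‖ = ‖a n‖ * (2:ℝ) ^ (-(n:ℝ) * α) := by
    intro n x
    simp only [hT, norm_mul, hexp1, mul_one, Complex.norm_real, Real.norm_eq_abs,
      abs_of_pos (hrnpos n)]
  have hTle : ∀ (n : ℕ) (x : ℝ), ‖T n x‖ ≤ A * r ^ n := by
    intro n x
    rw [hTnorm, hrn]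
    exact mul_le_mul_of_nonneg_right (hA n) (pow_nonneg hr0.le n)
  have hTcont : ∀ n : ℕ, Continuous (T n) := by
    intro n
    apply Continuous.mul continuous_const
    exact Complex.continuous_exp.comp (by continuity)
  have hfc : Continuous f := by
    rw [hf]
    exact continuous_tsum hTcont hsum_r hTle
  have hfbdd : ∀ x : ℝ, ‖f x‖ ≤ ∑' n : ℕ, A * r ^ n := by
    intro x
    rw [hf]
    calc ‖∑' n, T n x‖ ≤ ∑' n, ‖T n x‖ := by
          apply norm_tsum_le_tsum_norm
          exact hsum_r.of_nonneg_of_le (fun n => norm_nonneg _) (fun n => hTle n x)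
      _ ≤ ∑' n, A * r ^ n := by
          apply Summable.tsum_le_tsum (fun n => hTle n x)
            (hsum_r.of_nonneg_of_le (fun n => norm_nonneg _) (fun n => hTle n x)) hsum_r
  intro j
  set c : ℝ := (2:ℝ) ^ j with hc
  have hc0 : (0:ℝ) < c := by positivity
  set ψj : ℝ → ℂ := fun x => (2:ℂ)^j * ψ (c * x) with hψj
  have hψjint : Integrable ψj := (hψint.comp_mul_left' hc0.ne').const_mul _
  have hψjnorm : ∀ x : ℝ, ‖ψj x‖ = c * ‖ψ (c * x)‖ := by
    intro x
    rw [hψj]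
    simp only [norm_mul]
    congr 1
    rw [show ((2:ℂ)^j) = ((c : ℝ) : ℂ) by rw [hc]; norm_cast]
    rw [Complex.norm_real, Real.norm_eq_abs, abs_of_pos hc0]
  -- Fourier computation for each term
  have key : ∀ n : ℕ, (∫ x : ℝ, T n x * ψj x)
      = a n * (((2:ℝ) ^ (-(n:ℝ) * α) : ℝ) : ℂ) * ψhat ((2:ℝ)^n / c) := by
    intro n
    set g : ℝ → ℂ := fun y => Complex.exp (Complex.I * (((2:ℝ)^n / c : ℝ) : ℂ) * y) * ψ y
      with hg
    have hgx : ∀ x : ℝ, T n x * ψj x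
        = (a n * (((2:ℝ) ^ (-(n:ℝ) * α) : ℝ) : ℂ) * (2:ℂ)^j) * g (c * x) := by
      intro x
      simp only [hT, hψj, hg]
      have h1 : Complex.I * (((2:ℝ)^n / c : ℝ) : ℂ) * ((c * x : ℝ) : ℂ)
          = (2:ℂ)^n * Complex.I * x := by
        have hcne : (c : ℂ) ≠ 0 := by
          simpa using Complex.ofReal_ne_zero.mpr hc0.ne'
        push_cast
        field_simp
      rw [h1]
      ring
    calc (∫ x : ℝ, T n x * ψj x)
        = ∫ x : ℝ, (a n * (((2:ℝ) ^ (-(n:ℝ) * α) : ℝ) : ℂ) * (2:ℂ)^j) * g (c * x) := by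
          simp_rw [hgx]
      _ = (a n * (((2:ℝ) ^ (-(n:ℝ) * α) : ℝ) : ℂ) * (2:ℂ)^j) * ∫ x : ℝ, g (c * x) := by
          rw [integral_const_mul]
      _ = (a n * (((2:ℝ) ^ (-(n:ℝ) * α) : ℝ) : ℂ) * (2:ℂ)^j) * (|c⁻¹| • ∫ y, g y) := by
          rw [Measure.integral_comp_mul_left g c]
      _ = a n * (((2:ℝ) ^ (-(n:ℝ) * α) : ℝ) : ℂ) * ψhat ((2:ℝ)^n / c) := by
          have hψg : ψhat ((2:ℝ)^n / c) = ∫ y, g y := by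
            simp only [hψhat, hg]
          rw [abs_of_pos (inv_pos.mpr hc0), Complex.real_smul, hψg]
          have h2 : ((c⁻¹ : ℝ) : ℂ) * (2:ℂ)^j = 1 := by
            have hcc : ((2:ℂ)^j) = ((c : ℝ) : ℂ) := by rw [hc]; norm_cast
            rw [hcc, ← Complex.ofReal_mul, inv_mul_cancel₀ hc0.ne']
            norm_num
          calc a n * (((2:ℝ) ^ (-(n:ℝ) * α) : ℝ) : ℂ) * (2:ℂ)^j
                * (((c⁻¹:ℝ):ℂ) * ∫ y, g y)
              = (((c⁻¹:ℝ):ℂ) * (2:ℂ)^j)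
                * (a n * (((2:ℝ) ^ (-(n:ℝ) * α) : ℝ) : ℂ) * ∫ y, g y) := by ring
            _ = a n * (((2:ℝ) ^ (-(n:ℝ) * α) : ℝ) : ℂ) * ∫ y, g y := by
                rw [h2, one_mul]
  -- values of the Fourier transform at the dyadic points
  have hvals : ∀ n : ℕ, n ≠ j → ψhat ((2:ℝ)^n / c) = 0 := by
    intro n hn
    rcases lt_or_gt_of_ne hn with h | h
    · apply h0
      left
      constructor
      · positivity
      · rw [div_le_iff₀ hc0, hc]
        have h2 : (2:ℝ)^(n+1) ≤ (2:ℝ)^j := pow_le_pow_right₀ one_le_two h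
        rw [pow_succ] at h2
        linarith
    · apply h0
      right
      rw [le_div_iff₀ hc0, hc]
      have h2 : (2:ℝ)^(j+1) ≤ (2:ℝ)^n := pow_le_pow_right₀ one_le_two h
      rw [pow_succ] at h2
      linarith
  have hvalj : ψhat ((2:ℝ)^j / c) = 1 := by
    rw [hc, div_self (by positivity : ((2:ℝ)^j) ≠ 0)] at *
    exact h1
  -- integrability of each term
  have hFint : ∀ n : ℕ, Integrable (fun x => T n x * ψj x) := by
    intro n
    apply hψjint.bdd_mul (hTcont n).aestronglyMeasurable
    exact Filter.Eventually.of_forall (fun x => hTle n x)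
  -- summability of the integrals of the norms
  have hFsum : Summable fun n : ℕ => ∫ x : ℝ, ‖T n x * ψj x‖ := by
    apply Summable.of_nonneg_of_le
      (fun n => integral_nonneg fun x => norm_nonneg _)
      (fun n => ?_) (hsum_r.mul_right (∫ x : ℝ, ‖ψj x‖))
    calc (∫ x : ℝ, ‖T n x * ψj x‖) ≤ ∫ x : ℝ, (A * r ^ n) * ‖ψj x‖ := by
          apply integral_mono_of_nonneg
            (Filter.Eventually.of_forall fun x => norm_nonneg _)
            (hψjint.norm.const_mul _)
          apply Filter.Eventually.of_forall
          intro x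
          show ‖T n x * ψj x‖ ≤ A * r ^ n * ‖ψj x‖
          rw [norm_mul]
          exact mul_le_mul_of_nonneg_right (hTle n x) (norm_nonneg _)
      _ = A * r ^ n * ∫ x : ℝ, ‖ψj x‖ := by rw [integral_const_mul]
  -- interchange sum and integral
  have hswap : (∫ x : ℝ, f x * ψj x) = ∑' n : ℕ, ∫ x : ℝ, T n x * ψj x := by
    rw [show (fun x : ℝ => f x * ψj x) = fun x : ℝ => ∑' n : ℕ, T n x * ψj x by
      funext x
      rw [hf]
      exact (tsum_mul_right).symm]
    exact (integral_tsum_of_summable_integral_norm hFint hFsum).symm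
  -- Part 1
  have part1 : (∫ x : ℝ, f x * ψj x) = a j * (((2:ℝ) ^ (-(j:ℝ) * α) : ℝ) : ℂ) := by
    rw [hswap]
    rw [show (fun n : ℕ => ∫ x : ℝ, T n x * ψj x)
        = fun n : ℕ => a n * (((2:ℝ) ^ (-(n:ℝ) * α) : ℝ) : ℂ) * ψhat ((2:ℝ)^n / c) from
      funext key]
    rw [tsum_eq_single j (fun n hn => by rw [hvals n hn, mul_zero])]
    rw [hvalj, mul_one]
  refine ⟨part1, ?_⟩
  -- Part 2 : the bound
  set M : ℝ := ∫ x : ℝ, |x| ^ α * ‖ψ x‖ with hM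
  have hψhat0 : ψhat 0 = 0 := h0 0 (Or.inl ⟨le_refl 0, by norm_num⟩)
  have hintψ : (∫ x : ℝ, ψ x) = 0 := by
    rw [hψhat] at hψhat0
    simpa using hψhat0
  have hintψj : (∫ x : ℝ, ψj x) = 0 := by
    rw [hψj]
    rw [integral_const_mul, Measure.integral_comp_mul_left ψ c, hintψ, smul_zero, mul_zero]
  have hfψjint : Integrable (fun x => f x * ψj x) :=
    hψjint.bdd_mul hfc.aestronglyMeasurable (Filter.Eventually.of_forall hfbdd)
  have hsub : (∫ x : ℝ, f x * ψj x) = ∫ x : ℝ, (f x - f 0) * ψj x := by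
    have h2i : Integrable fun x => f 0 * ψj x := hψjint.const_mul _
    rw [show (fun x : ℝ => (f x - f 0) * ψj x)
        = fun x : ℝ => f x * ψj x - f 0 * ψj x from funext fun x => by ring]
    rw [integral_sub hfψjint h2i, integral_const_mul, hintψj, mul_zero, sub_zero]
  -- the dominating function
  set w : ℝ := (2:ℝ) ^ (-(j:ℝ) * α) with hw
  have hw0 : 0 < w := Real.rpow_pos_of_pos two_pos _
  have hcw : c ^ (-α) = w := by
    rw [hc, hw, ← Real.rpow_natCast 2 j, ← Real.rpow_mul (by norm_num)]
    ring_nf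
  have habs : ∀ x : ℝ, |x| ^ α = w * |c * x| ^ α := by
    intro x
    rw [abs_mul, abs_of_pos hc0, Real.mul_rpow hc0.le (abs_nonneg x),
      ← mul_assoc, ← hcw, ← Real.rpow_add hc0]
    rw [neg_add_cancel, Real.rpow_zero, one_mul]
  set G : ℝ → ℝ := fun x => H * (w * c) * (|c * x| ^ α * ‖ψ (c * x)‖) with hG
  have hGint : Integrable G := (hmom.comp_mul_left' hc0.ne').const_mul _
  have hbound : ∀ x : ℝ, ‖(f x - f 0) * ψj x‖ ≤ G x := by
    intro x
    rw [norm_mul, hψjnorm, hG]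
    have h3 : ‖f x - f 0‖ ≤ H * (w * |c * x| ^ α) := by
      have := hHolder x 0
      rw [sub_zero] at this
      calc ‖f x - f 0‖ ≤ H * |x| ^ α := this
        _ = H * (w * |c * x| ^ α) := by rw [habs x]
    calc ‖f x - f 0‖ * (c * ‖ψ (c * x)‖)
        ≤ (H * (w * |c * x| ^ α)) * (c * ‖ψ (c * x)‖) := by
          apply mul_le_mul_of_nonneg_right h3
          positivity
      _ = H * (w * c) * (|c * x| ^ α * ‖ψ (c * x)‖) := by ring
  have hGval : (∫ x : ℝ, G x) = H * w * M := by
    rw [hG]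
    rw [integral_const_mul,
      Measure.integral_comp_mul_left (fun y => |y| ^ α * ‖ψ y‖) c,
      abs_of_pos (inv_pos.mpr hc0), smul_eq_mul, ← hM]
    field_simp
  have hnorm : ‖∫ x : ℝ, (f x - f 0) * ψj x‖ ≤ H * w * M := by
    rw [← hGval]
    exact norm_integral_le_of_norm_le hGint (Filter.Eventually.of_forall hbound)
  rw [← hsub, part1] at hnorm
  have hlhs : ‖a j * ((w : ℝ) : ℂ)‖ = ‖a j‖ * w := by
    rw [norm_mul, Complex.norm_real, Real.norm_eq_abs,
      abs_of_pos hw0]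
  rw [hlhs] at hnorm
  have : ‖a j‖ * w ≤ (H * M) * w := by
    calc ‖a j‖ * w ≤ H * w * M := hnorm
      _ = (H * M) * w := by ring
  exact le_of_mul_le_mul_right this hw0
end

section
/- Let (a_n)_{n≥0} be a sequence of complex numbers with A = sup_{n≥0} |a_n| < ∞, and define f : ℝ → ℂ by f(x) = Σ_{n=0}^∞ a_n·2^{−n}·exp(2^n·i·x) (the series converges absolutely and uniformly, so f is continuous). Then f lies in the Zygmund class with constant at most 10·A: for all x, h ∈ ℝ, |f(x+h) + f(x−h) − 2·f(x)| ≤ 10·A·|h|. -/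
lemma aux_cos_bound (s : ℝ) : 2 * (1 - Real.cos s) ≤ min 4 (s ^ 2) := by
  have h1 := Real.neg_one_le_cos s
  have h2 := Real.one_sub_sq_div_two_le_cos (x := s)
  exact le_min (by linarith) (by linarith)

set_option maxHeartbeats 1000000 in
/-- If `(a n)` is a sequence of complex numbers with `|a n| ≤ A` and
`f x = Σ a n 2^{-n} exp(2^n i x)`, then `f` lies in the Zygmund class with constant at
most `10 A`: `|f(x+h) + f(x-h) - 2 f(x)| ≤ 10 A |h|` for all real `x, h`. -/
theorem stmt14 (a : ℕ → ℂ) (A : ℝ) (hA : ∀ n : ℕ, ‖a n‖ ≤ A)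
    (f : ℝ → ℂ)
    (hf : f = fun x : ℝ => ∑' n : ℕ,
      a n * (((2 : ℝ) ^ (-(n : ℝ)) : ℝ) : ℂ) * Complex.exp ((2 : ℂ) ^ n * Complex.I * x)) :
    ∀ x h : ℝ, ‖f (x + h) + f (x - h) - 2 * f x‖ ≤ 10 * A * |h| := by
  have hA0 : 0 ≤ A := le_trans (norm_nonneg _) (hA 0)
  intro x h
  rcases eq_or_ne h 0 with rfl | hh
  · have : f (x + 0) + f (x - 0) - 2 * f x = 0 := by
      rw [add_zero, sub_zero]; ring
    rw [this]; simp
  -- the summand as a function of the real point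
  set g : ℝ → ℕ → ℂ := fun t n =>
    a n * (((2 : ℝ) ^ (-(n : ℝ)) : ℝ) : ℂ) * Complex.exp ((2 : ℂ) ^ n * Complex.I * t) with hg
  have h2n : ∀ n : ℕ, ((2 : ℝ) ^ (-(n : ℝ))) = (1 / 2 : ℝ) ^ n := by
    intro n
    rw [Real.rpow_neg (by norm_num), Real.rpow_natCast, one_div, inv_pow]
  have hexp1 : ∀ (n : ℕ) (t : ℝ),
      ‖Complex.exp ((2 : ℂ) ^ n * Complex.I * t)‖ = 1 := by
    intro n t
    have : (2 : ℂ) ^ n * Complex.I * t = (((2 : ℝ) ^ n * t : ℝ) : ℂ) * Complex.I := by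
      push_cast; ring
    rw [this, Complex.norm_exp_ofReal_mul_I]
  have hnorm : ∀ (t : ℝ) (n : ℕ), ‖g t n‖ = ‖a n‖ * (1 / 2 : ℝ) ^ n := by
    intro t n
    rw [hg]
    simp only [norm_mul, hexp1, mul_one, Complex.norm_real, Real.norm_eq_abs, h2n]
    rw [abs_of_nonneg (by positivity)]
  have hgeo : Summable (fun n : ℕ => (1 / 2 : ℝ) ^ n) :=
    summable_geometric_of_lt_one (by norm_num) (by norm_num)
  have hnormsum : ∀ t : ℝ, Summable (fun n => ‖g t n‖) := by
    intro t
    apply Summable.of_nonneg_of_le (fun n => (norm_nonneg _))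
      (fun n => ?_) (hgeo.mul_left A)
    rw [hnorm]
    exact mul_le_mul_of_nonneg_right (hA n) (by positivity)
  have hsg : ∀ t : ℝ, Summable (g t) := fun t => Summable.of_norm (hnormsum t)
  -- combined term
  set D : ℕ → ℂ := fun n => g (x + h) n + g (x - h) n - 2 * g x n with hD
  have hfx : f (x + h) + f (x - h) - 2 * f x = ∑' n, D n := by
    have e1 : f (x + h) = ∑' n, g (x + h) n := by rw [hf]
    have e2 : f (x - h) = ∑' n, g (x - h) n := by rw [hf]
    have e3 : f x = ∑' n, g x n := by rw [hf]
    rw [e1, e2, e3, ← Summable.tsum_add (hsg _) (hsg _), ← tsum_mul_left,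
      ← Summable.tsum_sub ((hsg _).add (hsg _)) ((hsg x).mul_left 2)]
  -- pointwise bound
  set c : ℕ → ℝ := fun n => A * ((1 / 2 : ℝ) ^ n * min 4 (((2 : ℝ) ^ n * h) ^ 2)) with hc
  have hc_nonneg : ∀ n, 0 ≤ c n := by
    intro n
    have : (0:ℝ) ≤ min 4 (((2 : ℝ) ^ n * h) ^ 2) := le_min (by norm_num) (by positivity)
    positivity
  have hDle : ∀ n, ‖D n‖ ≤ c n := by
    intro n
    have hsplit : ∀ u v : ℝ, Complex.exp ((2 : ℂ) ^ n * Complex.I * ((u + v : ℝ) : ℂ)) =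
        Complex.exp ((2 : ℂ) ^ n * Complex.I * u) * Complex.exp ((2 : ℂ) ^ n * Complex.I * v) := by
      intro u v
      rw [← Complex.exp_add]
      push_cast
      ring_nf
    have hxh : (x + h : ℝ) = x + h := rfl
    have factored : D n = a n * (((2 : ℝ) ^ (-(n : ℝ)) : ℝ) : ℂ) *
        Complex.exp ((2 : ℂ) ^ n * Complex.I * x) *
        (Complex.exp ((2 : ℂ) ^ n * Complex.I * h) +
          Complex.exp (-((2 : ℂ) ^ n * Complex.I * h)) - 2) := by
      rw [hD, hg]
      simp only
      have e1 := hsplit x h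
      have e2 : Complex.exp ((2 : ℂ) ^ n * Complex.I * ((x - h : ℝ) : ℂ)) =
          Complex.exp ((2 : ℂ) ^ n * Complex.I * x) *
          Complex.exp (-((2 : ℂ) ^ n * Complex.I * h)) := by
        rw [← Complex.exp_add]; push_cast; ring_nf
      push_cast at e1 e2 ⊢
      rw [e1, e2]
      ring
    set s : ℝ := (2 : ℝ) ^ n * h with hs
    have hE : Complex.exp ((2 : ℂ) ^ n * Complex.I * h) +
        Complex.exp (-((2 : ℂ) ^ n * Complex.I * h)) - 2
        = ((2 * Real.cos s - 2 : ℝ) : ℂ) := by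
      have harg : (2 : ℂ) ^ n * Complex.I * h = (s : ℂ) * Complex.I := by
        rw [hs]; push_cast; ring
      have harg2 : -((2 : ℂ) ^ n * Complex.I * h) = ((-s : ℝ) : ℂ) * Complex.I := by
        rw [hs]; push_cast; ring
      rw [harg2, harg, Complex.exp_mul_I, Complex.exp_mul_I,
        ← Complex.ofReal_cos, ← Complex.ofReal_sin, ← Complex.ofReal_cos, ← Complex.ofReal_sin,
        Real.cos_neg, Real.sin_neg]
      push_cast
      ring
    have hEb : ‖Complex.exp ((2 : ℂ) ^ n * Complex.I * h) +
        Complex.exp (-((2 : ℂ) ^ n * Complex.I * h)) - 2‖ ≤ min 4 (s ^ 2) := by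
      rw [hE, Complex.norm_real, Real.norm_eq_abs]
      have := aux_cos_bound s
      have hcos := Real.cos_le_one s
      rw [abs_of_nonpos (by linarith)]
      linarith
    rw [factored]
    rw [hc]
    simp only [norm_mul, hexp1, mul_one, Complex.norm_real, Real.norm_eq_abs, h2n]
    rw [abs_of_nonneg (by positivity : (0:ℝ) ≤ (1/2:ℝ)^n)]
    calc ‖a n‖ * (1 / 2 : ℝ) ^ n * ‖_‖
        ≤ A * (1 / 2 : ℝ) ^ n * min 4 (s ^ 2) := by
          apply mul_le_mul (mul_le_mul_of_nonneg_right (hA n) (by positivity)) hEb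
            (norm_nonneg _) (by positivity)
      _ = A * ((1 / 2 : ℝ) ^ n * min 4 (s ^ 2)) := by ring
  have hsumc : Summable c := by
    apply Summable.of_nonneg_of_le hc_nonneg (fun n => ?_) (hgeo.mul_left (A * 4))
    rw [hc]
    simp only
    have hle : min 4 (((2 : ℝ) ^ n * h) ^ 2) ≤ 4 := min_le_left _ _
    have h2 : (0:ℝ) ≤ (1/2:ℝ)^n := by positivity
    have := mul_le_mul_of_nonneg_left (mul_le_mul_of_nonneg_left hle h2) hA0
    linarith
  have hsumD : Summable (fun n => ‖D n‖) :=
    Summable.of_nonneg_of_le (fun n => norm_nonneg _) hDle hsumc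
  have hsumD' : Summable (fun n => ‖D n‖) := by
    simpa only using hsumD
  have step1 : ‖f (x + h) + f (x - h) - 2 * f x‖ ≤ ∑' n, c n := by
    rw [hfx]
    calc ‖∑' n, D n‖ ≤ ∑' n, ‖D n‖ := norm_tsum_le_tsum_norm hsumD'
      _ ≤ ∑' n, c n := by
        apply Summable.tsum_le_tsum _ hsumD' hsumc
        intro n
        exact hDle n
  refine step1.trans ?_
  have h0 : 0 < |h| := abs_pos.2 hh
  have htsum_geo : ∑' n : ℕ, (1/2 : ℝ) ^ n = 2 := by
    rw [tsum_geometric_of_lt_one (by norm_num) (by norm_num)]; norm_num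
  rcases le_or_gt 1 |h| with hge | hlt
  · -- |h| ≥ 1 : crude bound
    calc ∑' n, c n ≤ ∑' n : ℕ, (A * 4) * (1/2 : ℝ) ^ n := by
          apply Summable.tsum_le_tsum _ hsumc (hgeo.mul_left (A * 4))
          intro n
          rw [hc]; simp only
          have hle : min 4 (((2 : ℝ) ^ n * h) ^ 2) ≤ 4 := min_le_left _ _
          have h2 : (0:ℝ) ≤ (1/2:ℝ)^n := by positivity
          have := mul_le_mul_of_nonneg_left (mul_le_mul_of_nonneg_left hle h2) hA0
          linarith
      _ = (A * 4) * 2 := by rw [tsum_mul_left, htsum_geo]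
      _ ≤ 10 * A * |h| := by nlinarith
  · -- 0 < |h| < 1
    set t : ℝ := |h|⁻¹ with ht
    have ht0 : 0 < t := by positivity
    have ht1 : 1 < t := by
      rw [ht, lt_inv_comm₀ one_pos h0]; simpa using hlt
    have hfl : 1 ≤ ⌊t⌋₊ := Nat.le_floor (by exact_mod_cast ht1.le)
    set N : ℕ := Nat.log 2 ⌊t⌋₊ with hN
    set M : ℕ := N + 1 with hM
    have hN1 : (2:ℝ)^N ≤ t := by
      have h1 : (2:ℕ)^N ≤ ⌊t⌋₊ := Nat.pow_log_le_self 2 (by omega)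
      calc (2:ℝ)^N = ((2^N : ℕ) : ℝ) := by push_cast; ring
        _ ≤ (⌊t⌋₊ : ℝ) := by exact_mod_cast h1
        _ ≤ t := Nat.floor_le ht0.le
    have hN2 : t < (2:ℝ)^M := by
      have h1 : ⌊t⌋₊ < 2^M := Nat.lt_pow_succ_log_self (by norm_num) _
      have h2 : (⌊t⌋₊ : ℝ) + 1 ≤ (2:ℝ)^M := by
        have : ⌊t⌋₊ + 1 ≤ 2^M := h1
        exact_mod_cast this
      calc t < ⌊t⌋₊ + 1 := Nat.lt_floor_add_one t
        _ ≤ (2:ℝ)^M := h2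
    have hpowM : (0:ℝ) < (2:ℝ)^M := by positivity
    have hinvM : (1/2:ℝ)^M < |h| := by
      have e1 : |h| * t = 1 := mul_inv_cancel₀ h0.ne'
      have e2 : (1/2:ℝ)^M * (2:ℝ)^M = 1 := by rw [← mul_pow]; norm_num
      nlinarith [pow_pos (by norm_num : (0:ℝ) < 1/2) M]
    have hMle : (2:ℝ)^M ≤ 2 * t := by
      rw [hM, pow_succ]; nlinarith
    -- split the sum
    rw [← Summable.sum_add_tsum_nat_add M hsumc]
    have head : ∑ i ∈ Finset.range M, c i ≤ 2 * A * |h| := by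
      have hterm : ∀ i, c i ≤ A * h^2 * (2:ℝ)^i := by
        intro i
        rw [hc]; simp only
        have hmin : min 4 (((2 : ℝ) ^ i * h) ^ 2) ≤ ((2 : ℝ) ^ i * h) ^ 2 := min_le_right _ _
        have hinv : (1/2:ℝ)^i * (2:ℝ)^i = 1 := by rw [← mul_pow]; norm_num
        have h2 : (0:ℝ) ≤ (1/2:ℝ)^i := by positivity
        calc A * ((1/2:ℝ)^i * min 4 (((2 : ℝ) ^ i * h) ^ 2))
            ≤ A * ((1/2:ℝ)^i * ((2 : ℝ) ^ i * h) ^ 2) := by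
              apply mul_le_mul_of_nonneg_left (mul_le_mul_of_nonneg_left hmin h2) hA0
          _ = A * h^2 * ((1/2:ℝ)^i * (2:ℝ)^i * (2:ℝ)^i) := by ring
          _ = A * h^2 * (2:ℝ)^i := by rw [hinv, one_mul]
      calc ∑ i ∈ Finset.range M, c i ≤ ∑ i ∈ Finset.range M, A * h^2 * (2:ℝ)^i :=
            Finset.sum_le_sum (fun i _ => hterm i)
        _ = A * h^2 * ∑ i ∈ Finset.range M, (2:ℝ)^i := by rw [Finset.mul_sum]
        _ = A * h^2 * (((2:ℝ)^M - 1) / (2 - 1)) := by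
            rw [geom_sum_eq (by norm_num : (2:ℝ) ≠ 1)]
        _ ≤ A * h^2 * (2 * t) := by
            apply mul_le_mul_of_nonneg_left _ (by positivity)
            rw [show ((2:ℝ) - 1) = 1 by norm_num, div_one]
            linarith
        _ = 2 * A * (h^2 * t) := by ring
        _ = 2 * A * |h| := by
            have e : h^2 * t = |h| := by
              rw [ht, ← sq_abs, sq, mul_assoc, mul_inv_cancel₀ h0.ne', mul_one]
            rw [e]
    have tail : ∑' n : ℕ, c (n + M) ≤ 8 * A * |h| := by
      have hterm : ∀ n, c (n + M) ≤ (A * 4 * (1/2:ℝ)^M) * (1/2:ℝ)^n := by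
        intro n
        rw [hc]; simp only
        have hmin : min 4 (((2 : ℝ) ^ (n+M) * h) ^ 2) ≤ 4 := min_le_left _ _
        have hmn : (0:ℝ) ≤ min 4 (((2 : ℝ) ^ (n+M) * h) ^ 2) := le_min (by norm_num) (by positivity)
        have e : (1/2:ℝ)^(n+M) = (1/2:ℝ)^n * (1/2:ℝ)^M := pow_add _ _ _
        rw [e]
        have h2 : (0:ℝ) ≤ (1/2:ℝ)^n * (1/2:ℝ)^M := by positivity
        calc A * ((1/2:ℝ)^n * (1/2:ℝ)^M * min 4 (((2 : ℝ) ^ (n+M) * h) ^ 2))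
            ≤ A * ((1/2:ℝ)^n * (1/2:ℝ)^M * 4) := by
              apply mul_le_mul_of_nonneg_left (mul_le_mul_of_nonneg_left hmin h2) hA0
          _ = (A * 4 * (1/2:ℝ)^M) * (1/2:ℝ)^n := by ring
      have hsumshift : Summable (fun n : ℕ => c (n + M)) := hsumc.comp_injective (add_left_injective M)
      calc ∑' n : ℕ, c (n + M) ≤ ∑' n : ℕ, (A * 4 * (1/2:ℝ)^M) * (1/2:ℝ)^n :=
            Summable.tsum_le_tsum hterm hsumshift (hgeo.mul_left _)
        _ = (A * 4 * (1/2:ℝ)^M) * 2 := by rw [tsum_mul_left, htsum_geo]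
        _ ≤ 8 * A * |h| := by nlinarith [pow_pos (by norm_num : (0:ℝ) < 1/2) M]
    linarith
end

section
/- Let (M,d) be a metric space, fix α with 0 < α < 1, and let f : M → ℝ satisfy |f(x) − f(y)| ≤ H·d(x,y)^α for all x, y ∈ M, where H ≥ 0. For L > 0 define A_L(f)(x) = inf{f(w) + L·d(x,w) : w ∈ M}. Then: (i) the infimum is finite for every x ∈ M; (ii) A_L(f) is L-Lipschitz on M; (iii) f(x) − H^{1/(1−α)}·L^{−α/(1−α)} ≤ A_L(f)(x) ≤ f(x) for all x ∈ M; and (iv) if h : M → ℝ is L-Lipschitz and h(x) ≤ f(x) for all x ∈ M, then h(x) ≤ A_L(f)(x) for all x ∈ M. -/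
/-- Let `f` be Lipschitz of order `α` (with `0 < α < 1`) with constant `H` on a metric
space `M`, and for `L > 0` let `A_L f x = inf {f w + L d(x,w) : w ∈ M}`.  Then the
infimum is finite (the set is bounded below), `A_L f` is `L`-Lipschitz,
`f x - H^{1/(1-α)} L^{-α/(1-α)} ≤ A_L f x ≤ f x`, and `A_L f` dominates every
`L`-Lipschitz function `h ≤ f`. -/
theorem stmt15 {M : Type*} [MetricSpace M] (α : ℝ) (hα0 : 0 < α) (hα1 : α < 1)
    (H : ℝ) (hH : 0 ≤ H) (f : M → ℝ)
    (hf : ∀ x y : M, |f x - f y| ≤ H * dist x y ^ α)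
    (L : ℝ) (hL : 0 < L)
    (Af : M → ℝ) (hAf : Af = fun x : M => ⨅ w : M, (f w + L * dist x w)) :
    (∀ x : M, BddBelow (Set.range fun w : M => f w + L * dist x w)) ∧
    (∀ x y : M, |Af x - Af y| ≤ L * dist x y) ∧
    (∀ x : M, f x - H ^ ((1 : ℝ) / (1 - α)) * L ^ (-α / (1 - α)) ≤ Af x ∧ Af x ≤ f x) ∧
    (∀ h : M → ℝ, (∀ x y : M, |h x - h y| ≤ L * dist x y) →
      (∀ x : M, h x ≤ f x) → ∀ x : M, h x ≤ Af x) := by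
  have h1α : 0 < 1 - α := by linarith
  set C : ℝ := H ^ ((1 : ℝ) / (1 - α)) * L ^ (-α / (1 - α)) with hC
  have hC0 : 0 ≤ C := by positivity
  -- Key inequality: H * t^α ≤ L * t + C for t ≥ 0.
  have key : ∀ t : ℝ, 0 ≤ t → H * t ^ α ≤ L * t + C := by
    intro t ht
    have hpq : ((1 : ℝ)/α).HolderConjugate ((1 : ℝ)/(1-α)) := by
      rw [Real.holderConjugate_iff]
      constructor
      · rw [lt_div_iff₀ hα0]; linarith
      · field_simp; ring
    have hLt : (0:ℝ) ≤ L * t := by positivity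
    have ha : (0:ℝ) ≤ (L * t) ^ α := Real.rpow_nonneg hLt α
    have hb : (0:ℝ) ≤ H * L ^ (-α) := by positivity
    have hy := Real.young_inequality_of_nonneg ha hb hpq
    have e1 : (L * t) ^ α * (H * L ^ (-α)) = H * t ^ α := by
      rw [Real.mul_rpow hL.le ht]
      have h2 : L ^ α * (L:ℝ) ^ (-α) = 1 := by
        rw [← Real.rpow_add hL]; simp
      calc L ^ α * t ^ α * (H * L ^ (-α)) = (L ^ α * L ^ (-α)) * (H * t ^ α) := by ring
        _ = H * t ^ α := by rw [h2, one_mul]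
    have e2 : ((L * t) ^ α) ^ ((1:ℝ)/α) = L * t := by
      rw [← Real.rpow_mul hLt, mul_one_div, div_self hα0.ne', Real.rpow_one]
    have e3 : (H * L ^ (-α)) ^ ((1:ℝ)/(1-α)) = C := by
      rw [Real.mul_rpow hH (Real.rpow_nonneg hL.le _), ← Real.rpow_mul hL.le, hC]
      congr 1
      field_simp
    rw [e1, e2, e3] at hy
    have : L * t / (1/α) + C / (1/(1-α)) = α * (L * t) + (1-α) * C := by
      field_simp
    rw [this] at hy
    nlinarith
  subst hAf
  -- lower bound on each element of the range
  have hlow : ∀ x w : M, f x - C ≤ f w + L * dist x w := by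
    intro x w
    have h1 : f x - f w ≤ H * dist x w ^ α := (abs_le.mp (hf x w)).2
    have h2 := key (dist x w) dist_nonneg
    linarith
  have hbdd : ∀ x : M, BddBelow (Set.range fun w : M => f w + L * dist x w) := by
    intro x
    exact ⟨f x - C, by rintro _ ⟨w, rfl⟩; exact hlow x w⟩
  have hle : ∀ x y : M, (⨅ w : M, (f w + L * dist x w)) ≤
      (⨅ w : M, (f w + L * dist y w)) + L * dist x y := by
    intro x y
    haveI : Nonempty M := ⟨x⟩
    rw [← sub_le_iff_le_add]
    apply le_ciInf
    intro w
    rw [sub_le_iff_le_add]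
    have : f w + L * dist x w ≤ f w + L * dist y w + L * dist x y := by
      have := dist_triangle x y w
      nlinarith [dist_comm x y]
    exact (ciInf_le (hbdd x) w).trans this
  refine ⟨hbdd, ?_, ?_, ?_⟩
  · intro x y
    haveI : Nonempty M := ⟨x⟩
    rw [abs_sub_le_iff]
    constructor
    · linarith [hle x y]
    · linarith [hle y x, dist_comm x y ▸ (hle y x)]
  · intro x
    haveI : Nonempty M := ⟨x⟩
    constructor
    · exact le_ciInf fun w => hlow x w
    · have := ciInf_le (hbdd x) x
      simpa using this
  · intro h hhL hhf x
    haveI : Nonempty M := ⟨x⟩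
    apply le_ciInf
    intro w
    have h1 : h x - h w ≤ L * dist x w := (abs_le.mp (hhL x w)).2
    linarith [hhf w]
end

section
/- Let (M,d) be a metric space and μ a positive Borel measure on M such that every open ball has positive and finite μ-measure and μ is doubling: μ(B(x,2r)) ≤ C·μ(B(x,r)) for all x ∈ M and r > 0. For t > 0 set p_t(x,y) = max(1 − t^{−1}·d(x,y), 0), ρ_t(x) = ∫_M p_t(x,y) dμ(y), φ_t(x,y) = ρ_t(x)^{−1}·p_t(x,y), and P_t(f)(x) = ∫_M φ_t(x,y)·f(y) dμ(y). Fix α with 0 < α ≤ 1. Then there exists a constant C′ > 0, depending only on the doubling constant C, such that for every f : M → ℂ satisfying |f(x) − f(y)| ≤ H·d(x,y)^α for all x, y ∈ M, and for every t > 0, the function P_t(f) is Lipschitz with constant C′·t^{α−1}·H: |P_t(f)(x) − P_t(f)(z)| ≤ C′·t^{α−1}·H·d(x,z) for all x, z ∈ M. -/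
open MeasureTheory Metric

universe u

/-- Fix a doubling constant `C` and `0 < α ≤ 1`.  Then there is a constant `C' > 0`,
depending only on `C` (and the fixed `α`), such that: for every metric space `M` with a
Borel measure `μ` giving positive finite measure to all balls and doubling with constant
`C`, every function `f` which is Lipschitz of order `α` with constant `H`, and every
`t > 0`, the regularized function `P_t f x = ∫ φ_t(x,y) f(y) dμ(y)` (where
`p_t(x,y) = max(1 - t⁻¹ d(x,y), 0)`, `ρ_t x = ∫ p_t(x,y) dμ(y)`,
`φ_t(x,y) = ρ_t(x)⁻¹ p_t(x,y)`) is Lipschitz with constant `C' t^{α-1} H`. -/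
theorem stmt17 (C : ℝ) (hC : 0 < C) (α : ℝ) (hα0 : 0 < α) (hα1 : α ≤ 1) :
    ∃ C' : ℝ, 0 < C' ∧
      ∀ (M : Type u) [MetricSpace M] [MeasurableSpace M] [BorelSpace M]
        (μ : Measure M),
        (∀ (x : M) (r : ℝ), 0 < r → 0 < μ (ball x r) ∧ μ (ball x r) < ⊤) →
        (∀ (x : M) (r : ℝ), 0 < r →
          μ (ball x (2 * r)) ≤ ENNReal.ofReal C * μ (ball x r)) →
        ∀ (H : ℝ), 0 ≤ H → ∀ f : M → ℂ,
          (∀ x y : M, ‖f x - f y‖ ≤ H * dist x y ^ α) →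
          ∀ t : ℝ, 0 < t →
            ∀ (pt : M → M → ℝ), pt = (fun x y => max (1 - t⁻¹ * dist x y) 0) →
            ∀ (ρt : M → ℝ), ρt = (fun x => ∫ y, pt x y ∂μ) →
            ∀ (φt : M → M → ℝ), φt = (fun x y => (ρt x)⁻¹ * pt x y) →
            ∀ (Ptf : M → ℂ), Ptf = (fun x => ∫ y, (φt x y : ℂ) * f y ∂μ) →
              ∀ x z : M,
                ‖Ptf x - Ptf z‖ ≤ C' * t ^ (α - 1) * H * dist x z := by
  refine ⟨8 * C ^ 2 + 3, by positivity, ?_⟩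
  intro M _ _ _ μ hball hdbl H hH f hf t ht pt hpt ρt hρt φt hφt Ptf hPtf x z
  have ht' : t ≠ 0 := ht.ne'
  have hti : 0 < t⁻¹ := inv_pos.mpr ht
  have hpt' : ∀ a y : M, pt a y = max (1 - t⁻¹ * dist a y) 0 := fun a y => by rw [hpt]
  have hρt' : ∀ a : M, ρt a = ∫ y, pt a y ∂μ := fun a => by rw [hρt]
  have hφt' : ∀ a y : M, φt a y = (ρt a)⁻¹ * pt a y := fun a y => by rw [hφt]
  have hPtf' : ∀ a : M, Ptf a = ∫ y, (φt a y : ℂ) * f y ∂μ := fun a => by rw [hPtf]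
  have habs : ∀ a b : M, ‖f a - f b‖ ≤ H * dist a b ^ α := by
    intro a b; exact hf a b
  -- basic facts about pt
  have p_nonneg : ∀ a y : M, 0 ≤ pt a y := fun a y => (hpt' a y) ▸ le_max_right _ _
  have p_le_one : ∀ a y : M, pt a y ≤ 1 := by
    intro a y
    rw [hpt' a y]
    have : 0 ≤ t⁻¹ * dist a y := by positivity
    exact max_le (by linarith) zero_le_one
  have p_zero : ∀ a y : M, t ≤ dist a y → pt a y = 0 := by
    intro a y h
    rw [hpt' a y]
    have h1 : 1 ≤ t⁻¹ * dist a y := by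
      calc (1:ℝ) = t⁻¹ * t := (inv_mul_cancel₀ ht').symm
        _ ≤ t⁻¹ * dist a y := mul_le_mul_of_nonneg_left h hti.le
    exact max_eq_right (by linarith)
  have p_half : ∀ a y : M, y ∈ ball a (t / 2) → 1 / 2 ≤ pt a y := by
    intro a y hy
    rw [mem_ball'] at hy
    rw [hpt' a y]
    have h1 : t⁻¹ * dist a y ≤ 1 / 2 := by
      calc t⁻¹ * dist a y ≤ t⁻¹ * (t / 2) := mul_le_mul_of_nonneg_left hy.le hti.le
        _ = 1 / 2 := by field_simp
    exact le_max_of_le_left (by linarith)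
  have p_lip : ∀ a b y : M, |pt a y - pt b y| ≤ t⁻¹ * dist a b := by
    intro a b y
    rw [hpt' a y, hpt' b y]
    refine le_trans (abs_max_sub_max_le_abs _ _ _) ?_
    have h0 : (1 - t⁻¹ * dist a y) - (1 - t⁻¹ * dist b y) = t⁻¹ * (dist b y - dist a y) := by ring
    rw [h0, abs_mul, abs_of_pos hti]
    refine mul_le_mul_of_nonneg_left ?_ hti.le
    rw [dist_comm a b]
    exact abs_dist_sub_le b a y
  have cont_p : ∀ a : M, Continuous (pt a) := by
    intro a
    rw [hpt]
    fun_prop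
  have μ_fin : ∀ (a : M) (r : ℝ), 0 < r → μ (ball a r) ≠ ⊤ := fun a r hr => (hball a r hr).2.ne
  have int_ind : ∀ (a : M) (r : ℝ) (c : ℝ), 0 < r →
      Integrable ((ball a r).indicator (fun _ => c)) μ := by
    intro a r c hr
    rw [integrable_indicator_iff measurableSet_ball]
    exact integrableOn_const (hball a r hr).2.ne
  have int_p : ∀ a : M, Integrable (pt a) μ := by
    intro a
    refine Integrable.mono' (int_ind a t 1 ht) (cont_p a).aestronglyMeasurable ?_
    refine Filter.Eventually.of_forall fun y => ?_
    rw [Real.norm_of_nonneg (p_nonneg a y)]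
    by_cases h : y ∈ ball a t
    · rw [Set.indicator_of_mem h]; exact p_le_one a y
    · rw [Set.indicator_of_notMem h]
      rw [mem_ball'] at h
      exact le_of_eq (p_zero a y (not_lt.mp h))
  have ρ_lb : ∀ a : M, 1 / 2 * (μ (ball a (t / 2))).toReal ≤ ρt a := by
    intro a
    rw [hρt' a]
    calc 1 / 2 * (μ (ball a (t / 2))).toReal
        ≤ ∫ y in ball a (t / 2), pt a y ∂μ :=
          setIntegral_ge_of_const_le_real measurableSet_ball (μ_fin a _ (by linarith))
            (fun y hy => p_half a y hy) (int_p a).integrableOn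
      _ ≤ ∫ y, pt a y ∂μ :=
          setIntegral_le_integral (int_p a) (Filter.Eventually.of_forall (p_nonneg a))
  have ρ_pos : ∀ a : M, 0 < ρt a := by
    intro a
    refine lt_of_lt_of_le ?_ (ρ_lb a)
    have := (hball a (t / 2) (by linarith))
    have h1 : 0 < (μ (ball a (t / 2))).toReal := ENNReal.toReal_pos this.1.ne' this.2.ne
    linarith
  have mu2t_le : ∀ a : M, (μ (ball a (2 * t))).toReal ≤ 2 * C ^ 2 * ρt a := by
    intro a
    have h1 : μ (ball a (2 * t)) ≤ ENNReal.ofReal C * (ENNReal.ofReal C * μ (ball a (t / 2))) := by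
      calc μ (ball a (2 * t)) ≤ ENNReal.ofReal C * μ (ball a t) := hdbl a t ht
        _ ≤ ENNReal.ofReal C * (ENNReal.ofReal C * μ (ball a (t / 2))) := by
            refine mul_le_mul_right ?_ _
            have h2 := hdbl a (t / 2) (by linarith : (0:ℝ) < t / 2)
            rwa [show 2 * (t / 2) = t by ring] at h2
    have hfin : ENNReal.ofReal C * (ENNReal.ofReal C * μ (ball a (t / 2))) ≠ ⊤ := by
      refine ENNReal.mul_ne_top ENNReal.ofReal_ne_top (ENNReal.mul_ne_top ENNReal.ofReal_ne_top (μ_fin a _ (by linarith)))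
    calc (μ (ball a (2 * t))).toReal
        ≤ (ENNReal.ofReal C * (ENNReal.ofReal C * μ (ball a (t / 2)))).toReal :=
          ENNReal.toReal_mono hfin h1
      _ = C * (C * (μ (ball a (t / 2))).toReal) := by
          rw [ENNReal.toReal_mul, ENNReal.toReal_mul, ENNReal.toReal_ofReal hC.le]
      _ ≤ C * (C * (2 * ρt a)) := by
          have := ρ_lb a
          have hc2 : 0 ≤ C * C := by positivity
          nlinarith [ρ_pos a]
      _ = 2 * C ^ 2 * ρt a := by ring
  -- continuity of f
  have cont_f : Continuous f := by
    have hold : HolderWith H.toNNReal α.toNNReal f := by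
      intro a b
      rw [edist_dist, edist_dist, Complex.dist_eq]
      calc ENNReal.ofReal (‖f a - f b‖) ≤ ENNReal.ofReal (H * dist a b ^ α) :=
            ENNReal.ofReal_le_ofReal (hf a b)
        _ = ENNReal.ofReal H * ENNReal.ofReal (dist a b) ^ α := by
            rw [ENNReal.ofReal_mul hH, ENNReal.ofReal_rpow_of_nonneg dist_nonneg hα0.le]
        _ = ↑H.toNNReal * ENNReal.ofReal (dist a b) ^ ((α.toNNReal : ℝ)) := by
            rw [Real.coe_toNNReal α hα0.le]; rfl
    exact hold.continuous (by simp [Real.toNNReal_pos, hα0])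
  -- integrability of pt * f
  have int_pf : ∀ a : M, Integrable (fun y => (pt a y : ℂ) * f y) μ := by
    intro a
    refine Integrable.mono' (int_ind a t (‖f a‖ + H * t ^ α) ht)
      ((Complex.continuous_ofReal.comp (cont_p a)).mul cont_f).aestronglyMeasurable ?_
    refine Filter.Eventually.of_forall fun y => ?_
    rw [norm_mul, Complex.norm_real, Real.norm_of_nonneg (p_nonneg a y)]
    by_cases h : y ∈ ball a t
    · rw [Set.indicator_of_mem h]
      have h1 : ‖f y‖ ≤ ‖f a‖ + H * t ^ α := by
        have h2 : ‖f y‖ ≤ ‖f a‖ + ‖f y - f a‖ := by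
          calc ‖f y‖ = ‖f a + (f y - f a)‖ := by ring_nf
            _ ≤ ‖f a‖ + ‖f y - f a‖ := norm_add_le _ _
        have h3 : ‖f y - f a‖ ≤ H * dist y a ^ α := habs y a
        have h4 : H * dist y a ^ α ≤ H * t ^ α := by
          refine mul_le_mul_of_nonneg_left ?_ hH
          refine Real.rpow_le_rpow dist_nonneg ?_ hα0.le
          rw [dist_comm]; exact (mem_ball'.mp h).le
        linarith
      calc pt a y * ‖f y‖ ≤ 1 * (‖f a‖ + H * t ^ α) :=
            mul_le_mul (p_le_one a y) h1 (norm_nonneg _) zero_le_one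
        _ = ‖f a‖ + H * t ^ α := one_mul _
    · rw [Set.indicator_of_notMem h, p_zero a y (not_lt.mp (fun hc => h (mem_ball'.mpr hc))), zero_mul]
  have int_pc : ∀ (a : M) (c : ℂ), Integrable (fun y => (pt a y : ℂ) * c) μ :=
    fun a c => ((int_p a).ofReal).mul_const c
  have int_pfc : ∀ (a : M) (c : ℂ), Integrable (fun y => (pt a y : ℂ) * (f y - c)) μ := by
    intro a c
    have : (fun y => (pt a y : ℂ) * (f y - c)) =
        fun y => (pt a y : ℂ) * f y - (pt a y : ℂ) * c := by
      funext y; ring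
    rw [this]
    exact (int_pf a).sub (int_pc a c)
  -- integral of φt = 1
  have ρ_ne : ∀ a : M, ρt a ≠ 0 := fun a => (ρ_pos a).ne'
  have int_φ : ∀ a : M, Integrable (φt a) μ := by
    intro a
    have : φt a = fun y => (ρt a)⁻¹ * pt a y := funext fun y => hφt' a y
    rw [this]
    exact (int_p a).const_mul _
  have φ_one : ∀ a : M, ∫ y, φt a y ∂μ = 1 := by
    intro a
    have : (fun y => φt a y) = fun y => (ρt a)⁻¹ * pt a y := funext fun y => hφt' a y
    rw [this, integral_const_mul, ← hρt' a, inv_mul_cancel₀ (ρ_ne a)]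
  have φ_nonneg : ∀ a y : M, 0 ≤ φt a y := by
    intro a y; rw [hφt' a y]; exact mul_nonneg (inv_nonneg.mpr (ρ_pos a).le) (p_nonneg a y)
  have int_φfc : ∀ (a : M) (c : ℂ), Integrable (fun y => (φt a y : ℂ) * (f y - c)) μ := by
    intro a c
    have : (fun y => (φt a y : ℂ) * (f y - c)) =
        fun y => ((ρt a)⁻¹ : ℂ) * ((pt a y : ℂ) * (f y - c)) := by
      funext y; rw [hφt' a y]; push_cast; ring
    rw [this]
    exact (int_pfc a c).const_mul _
  -- key identity
  have id_c : ∀ (a : M) (c : ℂ), Ptf a - c = ∫ y, (φt a y : ℂ) * (f y - c) ∂μ := by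
    intro a c
    have h1 : (fun y => (φt a y : ℂ) * (f y - c)) =
        fun y => (φt a y : ℂ) * f y - φt a y • c := by
      funext y; rw [Complex.real_smul]; ring
    rw [h1, integral_sub ?_ ?_, integral_smul_const, ← hPtf' a, φ_one a, one_smul]
    · have : (fun y => (φt a y : ℂ) * f y) =
          fun y => ((ρt a)⁻¹ : ℂ) * ((pt a y : ℂ) * f y) := by
        funext y; rw [hφt' a y]; push_cast; ring
      rw [this]
      exact (int_pf a).const_mul _
    · have : (fun y => φt a y • c) = fun y => (φt a y : ℂ) * c := by
        funext y; rw [Complex.real_smul]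
      rw [this]
      have h2 : (fun y => (φt a y : ℂ) * c) =
          fun y => ((ρt a)⁻¹ : ℂ) * ((pt a y : ℂ) * c) := by
        funext y; rw [hφt' a y]; push_cast; ring
      rw [h2]
      exact (int_pc a c).const_mul _
  -- estimate A : ‖Ptf a - f a‖ ≤ H * t ^ α
  have estA : ∀ a : M, ‖Ptf a - f a‖ ≤ H * t ^ α := by
    intro a
    rw [id_c a (f a)]
    refine le_trans (norm_integral_le_integral_norm _) ?_
    have h1 : ∫ y, ‖(φt a y : ℂ) * (f y - f a)‖ ∂μ ≤ ∫ y, φt a y * (H * t ^ α) ∂μ := by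
      refine integral_mono (int_φfc a (f a)).norm ((int_φ a).mul_const _) fun y => ?_
      rw [norm_mul, Complex.norm_real, Real.norm_of_nonneg (φ_nonneg a y)]
      by_cases h : dist a y < t
      · refine mul_le_mul_of_nonneg_left ?_ (φ_nonneg a y)
        refine le_trans (habs y a) ?_
        refine mul_le_mul_of_nonneg_left ?_ hH
        refine Real.rpow_le_rpow dist_nonneg ?_ hα0.le
        rw [dist_comm]; exact h.le
      · have hz : pt a y = 0 := p_zero a y (not_lt.mp h)
        have : φt a y = 0 := by rw [hφt' a y, hz, mul_zero]
        rw [this, zero_mul, zero_mul]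
    refine le_trans h1 ?_
    rw [integral_mul_const, φ_one a, one_mul]
  -- power identities
  have htα : t ^ (α - 1) * t = t ^ α := by
    calc t ^ (α - 1) * t = t ^ (α - 1) * t ^ (1 : ℝ) := by rw [Real.rpow_one]
      _ = t ^ (α - 1 + 1) := (Real.rpow_add ht _ _).symm
      _ = t ^ α := by norm_num
  have htp : 0 < t ^ (α - 1) := Real.rpow_pos_of_pos ht _
  rcases le_or_gt t (dist x z) with hcase | hcase
  · -- far case
    have hd0 : 0 < dist x z := lt_of_lt_of_le ht hcase
    have h1 : ‖Ptf x - Ptf z‖ ≤ ‖Ptf x - f x‖ + ‖f x - f z‖ + ‖Ptf z - f z‖ := by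
      calc ‖Ptf x - Ptf z‖ = ‖(Ptf x - f x) + (f x - f z) + (f z - Ptf z)‖ := by
            congr 1; ring
        _ ≤ ‖(Ptf x - f x) + (f x - f z)‖ + ‖f z - Ptf z‖ := norm_add_le _ _
        _ ≤ ‖Ptf x - f x‖ + ‖f x - f z‖ + ‖f z - Ptf z‖ := by
            have := norm_add_le (Ptf x - f x) (f x - f z); linarith
        _ = ‖Ptf x - f x‖ + ‖f x - f z‖ + ‖Ptf z - f z‖ := by rw [norm_sub_rev (f z) (Ptf z)]
    have e1 : H * t ^ α ≤ H * (t ^ (α - 1) * dist x z) := by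
      rw [← htα]
      exact mul_le_mul_of_nonneg_left (mul_le_mul_of_nonneg_left hcase htp.le) hH
    have e2 : ‖f x - f z‖ ≤ H * (t ^ (α - 1) * dist x z) := by
      refine (habs x z).trans ?_
      refine mul_le_mul_of_nonneg_left ?_ hH
      calc dist x z ^ α = dist x z ^ (α - 1) * dist x z := by
            rw [show dist x z ^ (α-1) * dist x z = dist x z ^ (α-1) * dist x z ^ (1:ℝ) by
              rw [Real.rpow_one], ← Real.rpow_add hd0]
            norm_num
        _ ≤ t ^ (α - 1) * dist x z := by
            refine mul_le_mul_of_nonneg_right ?_ dist_nonneg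
            exact Real.rpow_le_rpow_of_nonpos ht hcase (by linarith)
    have e3 := (estA x).trans e1
    have e4 := (estA z).trans e1
    have hpos : 0 ≤ C ^ 2 * (t ^ (α - 1) * (H * dist x z)) := by positivity
    nlinarith [h1, e2, e3, e4]
  · -- near case
    have hd : dist x z ≤ t := hcase.le
    have h2t : (0:ℝ) < 2 * t := by linarith
    have hrx : 0 < (ρt x)⁻¹ := inv_pos.mpr (ρ_pos x)
    have hrz : 0 < (ρt z)⁻¹ := inv_pos.mpr (ρ_pos z)
    have hm0 : 0 ≤ (μ (ball x (2 * t))).toReal := ENNReal.toReal_nonneg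
    -- difference of densities
    have hρdiff : |ρt x - ρt z| ≤ t⁻¹ * dist x z * (μ (ball x (2 * t))).toReal := by
      rw [hρt' x, hρt' z, ← integral_sub (int_p x) (int_p z), ← Real.norm_eq_abs]
      refine le_trans (norm_integral_le_integral_norm _) ?_
      have h1 : ∫ y, ‖pt x y - pt z y‖ ∂μ
          ≤ ∫ y, (ball x (2 * t)).indicator (fun _ => t⁻¹ * dist x z) y ∂μ := by
        refine integral_mono ((int_p x).sub (int_p z)).norm
          (int_ind x (2 * t) _ h2t) fun y => ?_
        rw [Real.norm_eq_abs]
        by_cases h : y ∈ ball x (2 * t)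
        · rw [Set.indicator_of_mem h]; exact p_lip x z y
        · rw [Set.indicator_of_notMem h]
          rw [mem_ball'] at h; push_neg at h
          have htri := dist_triangle x z y
          have hx0 : pt x y = 0 := p_zero x y (by linarith)
          have hz0 : pt z y = 0 := p_zero z y (by linarith)
          rw [hx0, hz0, sub_zero, abs_zero]
      refine le_trans h1 (le_of_eq ?_)
      rw [integral_indicator_const _ measurableSet_ball, smul_eq_mul, measureReal_def]
      ring
    -- key identity
    have hsplit : (fun y => ((φt x y - φt z y : ℝ) : ℂ) * (f y - f x)) =
        fun y => (φt x y : ℂ) * (f y - f x) - (φt z y : ℂ) * (f y - f x) := by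
      funext y; push_cast; ring
    have key : Ptf x - Ptf z = ∫ y, ((φt x y - φt z y : ℝ) : ℂ) * (f y - f x) ∂μ := by
      rw [hsplit, integral_sub (int_φfc x (f x)) (int_φfc z (f x)),
        ← id_c x (f x), ← id_c z (f x)]
      ring
    have int_key : Integrable (fun y => ((φt x y - φt z y : ℝ) : ℂ) * (f y - f x)) μ := by
      rw [hsplit]; exact (int_φfc x (f x)).sub (int_φfc z (f x))
    -- constants
    have hK1 : 0 ≤ (ρt x)⁻¹ * (t⁻¹ * dist x z) := by positivity
    have hK2 : 0 ≤ (ρt x)⁻¹ * (ρt z)⁻¹ * (t⁻¹ * dist x z) * (μ (ball x (2 * t))).toReal := by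
      positivity
    have hB : 0 ≤ H * (2 * t) ^ α := by positivity
    -- pointwise bound
    have hptw : ∀ y : M, ‖((φt x y - φt z y : ℝ) : ℂ) * (f y - f x)‖
        ≤ H * (2 * t) ^ α * ((ball x (2 * t)).indicator (fun _ => (ρt x)⁻¹ * (t⁻¹ * dist x z)) y
            + ((ρt x)⁻¹ * (ρt z)⁻¹ * (t⁻¹ * dist x z) * (μ (ball x (2 * t))).toReal) * pt z y) := by
      intro y
      rw [norm_mul, Complex.norm_real, Real.norm_eq_abs]
      by_cases hy : dist x y < t ∨ dist z y < t
      · have hyS : y ∈ ball x (2 * t) := by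
          rw [mem_ball']
          rcases hy with h | h
          · linarith
          · have := dist_triangle x z y; linarith
        have hfb : ‖f y - f x‖ ≤ H * (2 * t) ^ α := by
          refine (habs y x).trans ?_
          refine mul_le_mul_of_nonneg_left ?_ hH
          refine Real.rpow_le_rpow dist_nonneg ?_ hα0.le
          rw [dist_comm]; exact (mem_ball'.mp hyS).le
        have hφb : |φt x y - φt z y| ≤ (ρt x)⁻¹ * (t⁻¹ * dist x z)
            + ((ρt x)⁻¹ * (ρt z)⁻¹ * (t⁻¹ * dist x z) * (μ (ball x (2 * t))).toReal) * pt z y := by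
          rw [hφt' x y, hφt' z y]
          have e : (ρt x)⁻¹ * pt x y - (ρt z)⁻¹ * pt z y
              = (ρt x)⁻¹ * (pt x y - pt z y) + ((ρt x)⁻¹ - (ρt z)⁻¹) * pt z y := by ring
          rw [e]
          refine le_trans (abs_add_le _ _) ?_
          have b1 : |(ρt x)⁻¹ * (pt x y - pt z y)| ≤ (ρt x)⁻¹ * (t⁻¹ * dist x z) := by
            rw [abs_mul, abs_of_pos hrx]
            exact mul_le_mul_of_nonneg_left (p_lip x z y) hrx.le
          have b2 : |((ρt x)⁻¹ - (ρt z)⁻¹) * pt z y|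
              ≤ ((ρt x)⁻¹ * (ρt z)⁻¹ * (t⁻¹ * dist x z) * (μ (ball x (2 * t))).toReal) * pt z y := by
            rw [abs_mul, abs_of_nonneg (p_nonneg z y)]
            refine mul_le_mul_of_nonneg_right ?_ (p_nonneg z y)
            have e2 : (ρt x)⁻¹ - (ρt z)⁻¹ = (ρt z - ρt x) * ((ρt x)⁻¹ * (ρt z)⁻¹) := by
              have h1 : ρt x * (ρt x)⁻¹ = 1 := mul_inv_cancel₀ (ρ_ne x)
              have h2 : ρt z * (ρt z)⁻¹ = 1 := mul_inv_cancel₀ (ρ_ne z)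
              calc (ρt x)⁻¹ - (ρt z)⁻¹
                  = (ρt x)⁻¹ * (ρt z * (ρt z)⁻¹) - (ρt x * (ρt x)⁻¹) * (ρt z)⁻¹ := by
                    rw [h1, h2]; ring
                _ = (ρt z - ρt x) * ((ρt x)⁻¹ * (ρt z)⁻¹) := by ring
            rw [e2, abs_mul, abs_of_pos (mul_pos hrx hrz)]
            calc |ρt z - ρt x| * ((ρt x)⁻¹ * (ρt z)⁻¹)
                ≤ (t⁻¹ * dist x z * (μ (ball x (2 * t))).toReal) * ((ρt x)⁻¹ * (ρt z)⁻¹) := by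
                  refine mul_le_mul_of_nonneg_right ?_ (mul_pos hrx hrz).le
                  rw [abs_sub_comm]; exact hρdiff
              _ = (ρt x)⁻¹ * (ρt z)⁻¹ * (t⁻¹ * dist x z) * (μ (ball x (2 * t))).toReal := by ring
          linarith
        calc |φt x y - φt z y| * ‖f y - f x‖
            ≤ ((ρt x)⁻¹ * (t⁻¹ * dist x z)
              + ((ρt x)⁻¹ * (ρt z)⁻¹ * (t⁻¹ * dist x z) * (μ (ball x (2 * t))).toReal) * pt z y)
              * (H * (2 * t) ^ α) := by
              refine mul_le_mul hφb hfb (norm_nonneg _) ?_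
              have := mul_nonneg hK2 (p_nonneg z y)
              linarith
          _ = H * (2 * t) ^ α * ((ball x (2 * t)).indicator
                (fun _ => (ρt x)⁻¹ * (t⁻¹ * dist x z)) y
              + ((ρt x)⁻¹ * (ρt z)⁻¹ * (t⁻¹ * dist x z) * (μ (ball x (2 * t))).toReal)
                * pt z y) := by
              rw [Set.indicator_of_mem hyS]; ring
      · push_neg at hy
        have h1 : φt x y = 0 := by
          rw [hφt' x y, p_zero x y (not_lt.mp (by exact fun hc => absurd hc (not_lt.mpr hy.1))), mul_zero]
        have h2 : φt z y = 0 := by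
          rw [hφt' z y, p_zero z y hy.2, mul_zero]
        rw [h1, h2, sub_zero, abs_zero, zero_mul]
        refine mul_nonneg hB ?_
        refine add_nonneg ?_ (mul_nonneg hK2 (p_nonneg z y))
        exact Set.indicator_nonneg (fun _ _ => hK1) y
    -- integrate the bound
    have hd0 : 0 ≤ dist x z := dist_nonneg
    have hta2 : t ^ α * t⁻¹ = t ^ (α - 1) := by
      rw [← htα, mul_assoc, mul_inv_cancel₀ ht', mul_one]
    have h2a : ((2:ℝ) * t) ^ α = 2 ^ α * t ^ α := Real.mul_rpow (by norm_num) ht.le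
    have h2b : (2:ℝ) ^ α ≤ 2 := by
      calc (2:ℝ) ^ α ≤ (2:ℝ) ^ (1:ℝ) := Real.rpow_le_rpow_of_exponent_le one_le_two hα1
        _ = 2 := Real.rpow_one 2
    have htα0 : 0 ≤ t ^ α := (Real.rpow_pos_of_pos ht α).le
    have hB2 : H * (2 * t) ^ α ≤ 2 * (H * t ^ α) := by
      rw [h2a]
      nlinarith [mul_nonneg hH htα0]
    have hKm : (ρt x)⁻¹ * (μ (ball x (2 * t))).toReal ≤ 2 * C ^ 2 := by
      calc (ρt x)⁻¹ * (μ (ball x (2 * t))).toReal ≤ (ρt x)⁻¹ * (2 * C ^ 2 * ρt x) :=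
            mul_le_mul_of_nonneg_left (mu2t_le x) hrx.le
        _ = 2 * C ^ 2 * ((ρt x)⁻¹ * ρt x) := by ring
        _ = 2 * C ^ 2 := by rw [inv_mul_cancel₀ (ρ_ne x), mul_one]
    have g_int : Integrable (fun y => H * (2 * t) ^ α *
        ((ball x (2 * t)).indicator (fun _ => (ρt x)⁻¹ * (t⁻¹ * dist x z)) y
          + ((ρt x)⁻¹ * (ρt z)⁻¹ * (t⁻¹ * dist x z) * (μ (ball x (2 * t))).toReal) * pt z y)) μ :=
      ((int_ind x (2 * t) _ h2t).add ((int_p z).const_mul _)).const_mul _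
    have step1 : ‖Ptf x - Ptf z‖ ≤ ∫ y, H * (2 * t) ^ α *
        ((ball x (2 * t)).indicator (fun _ => (ρt x)⁻¹ * (t⁻¹ * dist x z)) y
          + ((ρt x)⁻¹ * (ρt z)⁻¹ * (t⁻¹ * dist x z) * (μ (ball x (2 * t))).toReal) * pt z y) ∂μ := by
      rw [key]
      exact le_trans (norm_integral_le_integral_norm _) (integral_mono int_key.norm g_int hptw)
    have step2 : ∫ y, H * (2 * t) ^ α *
        ((ball x (2 * t)).indicator (fun _ => (ρt x)⁻¹ * (t⁻¹ * dist x z)) y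
          + ((ρt x)⁻¹ * (ρt z)⁻¹ * (t⁻¹ * dist x z) * (μ (ball x (2 * t))).toReal) * pt z y) ∂μ
        = H * (2 * t) ^ α * (((ρt x)⁻¹ * (t⁻¹ * dist x z)) * (μ (ball x (2 * t))).toReal
          + ((ρt x)⁻¹ * (ρt z)⁻¹ * (t⁻¹ * dist x z) * (μ (ball x (2 * t))).toReal) * ρt z) := by
      rw [integral_const_mul, integral_add (int_ind x (2 * t) _ h2t) ((int_p z).const_mul _),
        integral_indicator_const _ measurableSet_ball, integral_const_mul, ← hρt' z, smul_eq_mul, measureReal_def]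
      ring
    have step3 : H * (2 * t) ^ α * (((ρt x)⁻¹ * (t⁻¹ * dist x z)) * (μ (ball x (2 * t))).toReal
          + ((ρt x)⁻¹ * (ρt z)⁻¹ * (t⁻¹ * dist x z) * (μ (ball x (2 * t))).toReal) * ρt z)
        = H * (2 * t) ^ α * (2 * (t⁻¹ * dist x z) * ((ρt x)⁻¹ * (μ (ball x (2 * t))).toReal)) := by
      have e4 : ((ρt x)⁻¹ * (ρt z)⁻¹ * (t⁻¹ * dist x z) * (μ (ball x (2 * t))).toReal) * ρt z
          = ((ρt x)⁻¹ * (t⁻¹ * dist x z)) * (μ (ball x (2 * t))).toReal := by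
        calc ((ρt x)⁻¹ * (ρt z)⁻¹ * (t⁻¹ * dist x z) * (μ (ball x (2 * t))).toReal) * ρt z
            = ((ρt x)⁻¹ * (t⁻¹ * dist x z) * (μ (ball x (2 * t))).toReal) * ((ρt z)⁻¹ * ρt z) := by
              ring
          _ = ((ρt x)⁻¹ * (t⁻¹ * dist x z)) * (μ (ball x (2 * t))).toReal := by
              rw [inv_mul_cancel₀ (ρ_ne z)]; ring
      rw [e4]; ring
    have step4 : H * (2 * t) ^ α * (2 * (t⁻¹ * dist x z) * ((ρt x)⁻¹ * (μ (ball x (2 * t))).toReal))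
        ≤ H * (2 * t) ^ α * (2 * (t⁻¹ * dist x z) * (2 * C ^ 2)) := by
      refine mul_le_mul_of_nonneg_left (mul_le_mul_of_nonneg_left hKm ?_) hB
      positivity
    have step5 : H * (2 * t) ^ α * (2 * (t⁻¹ * dist x z) * (2 * C ^ 2))
        ≤ 2 * (H * t ^ α) * (2 * (t⁻¹ * dist x z) * (2 * C ^ 2)) :=
      mul_le_mul_of_nonneg_right hB2 (by positivity)
    have step6 : 2 * (H * t ^ α) * (2 * (t⁻¹ * dist x z) * (2 * C ^ 2))
        = 8 * C ^ 2 * (t ^ α * t⁻¹) * H * dist x z := by ring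
    have final : ‖Ptf x - Ptf z‖ ≤ 2 * (H * t ^ α) * (2 * (t⁻¹ * dist x z) * (2 * C ^ 2)) := by
      refine step1.trans ?_
      rw [step2, step3]
      exact step4.trans step5
    rw [step6, hta2] at final
    have expand : (8 * C ^ 2 + 3) * t ^ (α - 1) * H * dist x z
        = 8 * C ^ 2 * t ^ (α - 1) * H * dist x z + 3 * (t ^ (α - 1) * (H * dist x z)) := by ring
    have h30 : 0 ≤ t ^ (α - 1) * (H * dist x z) := mul_nonneg htp.le (mul_nonneg hH hd0)
    rw [expand]
    linarith
end
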